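/- arXiv:2008.12198 — 10 statements merged into one kernel-verified Lean document; each statement's English description precedes it below -/
import Mathlib

section
/- Let $(\eta_\ell)_{\ell\in\mathbb{N}}$ be a sequence of nonnegative reals satisfying: (1) for all $\ell, N \in \mathbb{N}$, $\sum_{k=\ell}^{\ell+N} \eta_k^2 \le D(N) \eta_\ell^2$ for a function $D:\mathbb{N}\to(1,\infty)$; (2) quasi-monotonicity: $\eta_{\ell+k}^2 \le C_{\rm mon}\eta_\ell^2$ for all $\ell,k$. Suppose there exists $N_0\in\mathbb{N}$ with $q_{\log} := \log(D(N_0)) - \sum_{j=1}^{N_0} D(j)^{-1} < 0$. Then with $q := \exp(q_{\log}/N_0) < 1$ and $C := C_{\rm mon}\exp(-q_{\log})$, there holds $\eta_{\ell+k}^2 \le C q^k \eta_\ell^2$ for all $k,\ell\in\mathbb{N}$. -/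
/-!
Let `S` be the sum of `η_k²` over a window of length `n + 1` starting at `m`. By hypothesis
`S ≤ D(n) η_m²`, so dropping the first term leaves at most `(1 - 1/D(n)) S ≤ exp(-1/D(n)) S`.
Dropping the terms of the window one at a time gives
`η_{ℓ+N₀}² ≤ exp(-∑_{j=1}^{N₀} 1/D(j)) D(N₀) η_ℓ² = exp(q_log) η_ℓ²`,
so every block of `N₀` steps contracts by `exp(q_log) < 1`. Writing `k = N₀ m + r` with
`r < N₀`, quasi-monotonicity absorbs the remaining `r` steps at the cost of the factor `C_mon`,
and `exp(q_log)^m ≤ exp(-q_log) q^k`.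
-/

open Finset Real

section WindowSums

variable {a D : ℕ → ℝ}

theorem apply_add_le_exp_neg_sum_inv_mul_sum_Icc (ha : ∀ k, 0 ≤ a k) (hD : ∀ n, 0 < D n)
    (hsum : ∀ ℓ N : ℕ, ∑ k ∈ Icc ℓ (ℓ + N), a k ≤ D N * a ℓ) (m n : ℕ) :
    a (m + n) ≤ exp (-∑ j ∈ Icc 1 n, (D j)⁻¹) * ∑ k ∈ Icc m (m + n), a k := by
  induction n generalizing m with
  | zero => simp
  | succ n ih =>
    set S := ∑ k ∈ Icc m (m + (n + 1)), a k
    have hS : 0 ≤ S := sum_nonneg fun k _ => ha k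
    have hsplit : a m + ∑ k ∈ Icc (m + 1) (m + 1 + n), a k = S := by
      rw [Icc_add_one_left_eq_Ioc, add_right_comm, add_assoc,
        add_sum_Ioc_eq_sum_Icc (by omega)]
    have hfirst : (D (n + 1))⁻¹ * S ≤ a m := by
      rw [inv_mul_le_iff₀ (hD _)]
      exact hsum m (n + 1)
    have htail : ∑ k ∈ Icc (m + 1) (m + 1 + n), a k ≤ exp (-(D (n + 1))⁻¹) * S := by
      have hexp := add_one_le_exp (-(D (n + 1))⁻¹)
      nlinarith
    calc a (m + (n + 1)) = a (m + 1 + n) := by rw [add_right_comm, add_assoc]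
      _ ≤ exp (-∑ j ∈ Icc 1 n, (D j)⁻¹) * ∑ k ∈ Icc (m + 1) (m + 1 + n), a k :=
          ih (m + 1)
      _ ≤ exp (-∑ j ∈ Icc 1 n, (D j)⁻¹) * (exp (-(D (n + 1))⁻¹) * S) := by gcongr
      _ = exp (-∑ j ∈ Icc 1 (n + 1), (D j)⁻¹) * S := by
        rw [sum_Icc_succ_top (by omega), neg_add, exp_add, mul_assoc]

theorem apply_add_le_exp_mul_of_sum_Icc_le (ha : ∀ k, 0 ≤ a k) (hD : ∀ n, 0 < D n)
    (hsum : ∀ ℓ N : ℕ, ∑ k ∈ Icc ℓ (ℓ + N), a k ≤ D N * a ℓ) (ℓ N : ℕ) :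
    a (ℓ + N) ≤ exp (log (D N) - ∑ j ∈ Icc 1 N, (D j)⁻¹) * a ℓ :=
  calc a (ℓ + N) ≤ exp (-∑ j ∈ Icc 1 N, (D j)⁻¹) * ∑ k ∈ Icc ℓ (ℓ + N), a k :=
        apply_add_le_exp_neg_sum_inv_mul_sum_Icc ha hD hsum ℓ N
    _ ≤ exp (-∑ j ∈ Icc 1 N, (D j)⁻¹) * (D N * a ℓ) := by gcongr; exact hsum ℓ N
    _ = exp (log (D N) - ∑ j ∈ Icc 1 N, (D j)⁻¹) * a ℓ := by
        rw [sub_eq_neg_add, exp_add, exp_log (hD N), mul_assoc]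

end WindowSums

theorem apply_add_mul_le_pow_mul {a : ℕ → ℝ} {r : ℝ} (hr : 0 ≤ r) {N : ℕ}
    (h : ∀ ℓ, a (ℓ + N) ≤ r * a ℓ) (ℓ m : ℕ) : a (ℓ + N * m) ≤ r ^ m * a ℓ := by
  induction m with
  | zero => simp
  | succ m ih =>
    calc a (ℓ + N * (m + 1)) = a (ℓ + N * m + N) := by rw [mul_add_one, add_assoc]
      _ ≤ r * a (ℓ + N * m) := h _
      _ ≤ r * (r ^ m * a ℓ) := by gcongr
      _ = r ^ (m + 1) * a ℓ := by ring

theorem exp_pow_div_le {q : ℝ} (hq : q ≤ 0) {N : ℕ} (hN : 0 < N) (k : ℕ) :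
    exp q ^ (k / N) ≤ exp (-q) * exp (q / N) ^ k := by
  rw [← exp_nat_mul, ← exp_nat_mul, ← exp_add, exp_le_exp]
  have hNR : (0 : ℝ) < N := by exact_mod_cast hN
  have hk : (k : ℝ) < N * ((k / N : ℕ) + 1) := by exact_mod_cast Nat.lt_mul_div_succ k hN
  have hsplit : (k : ℝ) * (q / N) =
      ((k / N : ℕ) + 1) * q + q * (k - N * ((k / N : ℕ) + 1)) / N := by
    field_simp
    ring
  have hrem : 0 ≤ q * (k - N * ((k / N : ℕ) + 1)) / N :=
    div_nonneg (mul_nonneg_of_nonpos_of_nonpos hq (by linarith)) hNR.le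
  linarith

theorem apply_add_le_geometric_of_block_le {a : ℕ → ℝ} (ha : ∀ k, 0 ≤ a k) {C q : ℝ}
    (hC : 0 ≤ C) (hq : q ≤ 0) {N : ℕ} (hN : 0 < N)
    (hmon : ∀ ℓ k : ℕ, a (ℓ + k) ≤ C * a ℓ)
    (hblock : ∀ ℓ, a (ℓ + N) ≤ exp q * a ℓ) (k ℓ : ℕ) :
    a (ℓ + k) ≤ C * exp (-q) * exp (q / N) ^ k * a ℓ :=
  calc a (ℓ + k) = a (ℓ + N * (k / N) + k % N) := by rw [add_assoc, Nat.div_add_mod]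
    _ ≤ C * a (ℓ + N * (k / N)) := hmon _ _
    _ ≤ C * (exp q ^ (k / N) * a ℓ) := by
        gcongr
        exact apply_add_mul_le_pow_mul (exp_pos q).le hblock ℓ (k / N)
    _ ≤ C * (exp (-q) * exp (q / N) ^ k * a ℓ) := by
        gcongr
        · exact ha ℓ
        · exact exp_pow_div_le hq hN k
    _ = C * exp (-q) * exp (q / N) ^ k * a ℓ := by ring

theorem stmt_0_general (η : ℕ → ℝ)
    (D : ℕ → ℝ) (hD : ∀ N, 1 < D N)
    (hsum : ∀ ℓ N : ℕ, ∑ k ∈ Finset.Icc ℓ (ℓ + N), (η k) ^ 2 ≤ D N * (η ℓ) ^ 2)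
    (Cmon : ℝ) (hCmon : 0 < Cmon)
    (hmon : ∀ ℓ k : ℕ, (η (ℓ + k)) ^ 2 ≤ Cmon * (η ℓ) ^ 2)
    (N₀ : ℕ) (hN₀ : 0 < N₀)
    (qlog : ℝ)
    (hqlog : qlog = Real.log (D N₀) - ∑ j ∈ Finset.Icc 1 N₀, (D j)⁻¹)
    (hneg : qlog < 0) :
    Real.exp (qlog / N₀) < 1 ∧
      ∀ k ℓ : ℕ, (η (ℓ + k)) ^ 2 ≤
        (Cmon * Real.exp (-qlog)) * (Real.exp (qlog / N₀)) ^ k * (η ℓ) ^ 2 := by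
  have hsq : ∀ k, 0 ≤ η k ^ 2 := fun k => sq_nonneg (η k)
  have hblock : ∀ ℓ, η (ℓ + N₀) ^ 2 ≤ exp qlog * η ℓ ^ 2 := fun ℓ => hqlog ▸
    apply_add_le_exp_mul_of_sum_Icc_le hsq (fun n => one_pos.trans (hD n)) hsum ℓ N₀
  exact ⟨exp_lt_one_iff.mpr (div_neg_of_neg_of_pos hneg (by exact_mod_cast hN₀)),
    apply_add_le_geometric_of_block_le hsq hCmon.le hneg.le hN₀ hmon hblock⟩

/-- Lemma `lem:Nsum`: if a nonnegative sequence satisfies the summed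
estimator bound and quasi-monotonicity, and `q_log < 0`, then the sequence contracts
geometrically with `q = exp(q_log/N₀) < 1` and `C = C_mon * exp(-q_log)`. -/
theorem stmt_0 (η : ℕ → ℝ) (hη : ∀ ℓ, 0 ≤ η ℓ)
    (D : ℕ → ℝ) (hD : ∀ N, 1 < D N)
    (hsum : ∀ ℓ N : ℕ, ∑ k ∈ Finset.Icc ℓ (ℓ + N), (η k) ^ 2 ≤ D N * (η ℓ) ^ 2)
    (Cmon : ℝ) (hCmon : 0 < Cmon)
    (hmon : ∀ ℓ k : ℕ, (η (ℓ + k)) ^ 2 ≤ Cmon * (η ℓ) ^ 2)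
    (N₀ : ℕ) (hN₀ : 0 < N₀)
    (qlog : ℝ)
    (hqlog : qlog = Real.log (D N₀) - ∑ j ∈ Finset.Icc 1 N₀, (D j)⁻¹)
    (hneg : qlog < 0) :
    Real.exp (qlog / N₀) < 1 ∧
      ∀ k ℓ : ℕ, (η (ℓ + k)) ^ 2 ≤
        (Cmon * Real.exp (-qlog)) * (Real.exp (qlog / N₀)) ^ k * (η ℓ) ^ 2 :=
  stmt_0_general η D hD hsum Cmon hCmon hmon N₀ hN₀ qlog hqlog hneg
end

section
/- Let $(\eta_\ell)$ be a sequence of nonnegative reals satisfying $\sum_{k=\ell}^{\ell+N}\eta_k^2 \le D(N)\eta_\ell^2$ for all $\ell,N$. Then for all $k,\ell\in\mathbb{N}$ there holds $\eta_{\ell+k}^2 \le \left(\prod_{j=1}^k (1 - D(j)^{-1})\right) \sum_{j=\ell}^{\ell+k} \eta_j^2$, where the empty product equals $1$. -/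
open Finset

/-!
Peel off the first term: if `S = a ℓ + T` is the window sum starting at `ℓ` and `S ≤ D * a ℓ`,
then `T = S - a ℓ ≤ (1 - D⁻¹) S`. Applying the claim for `k` to the shorter window starting at
`ℓ + 1` and multiplying through by the nonnegative product gives the claim for `k + 1`.
-/

lemma sum_Icc_eq_add_sum_Icc_succ {M : Type*} [AddCommMonoid M] (a : ℕ → M) (ℓ k : ℕ) :
    ∑ j ∈ Icc ℓ (ℓ + (k + 1)), a j = a ℓ + ∑ j ∈ Icc (ℓ + 1) (ℓ + 1 + k), a j := by
  rw [Icc_add_one_left_eq_Ioc, ← add_sum_Ioc_eq_sum_Icc (by omega), add_right_comm ℓ 1 k,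
    add_assoc]

section

variable {𝕜 : Type*} [Field 𝕜] [LinearOrder 𝕜] [IsStrictOrderedRing 𝕜]

lemma sub_le_one_sub_inv_mul_of_le_mul {a s d : 𝕜} (hd : 0 < d) (h : s ≤ d * a) :
    s - a ≤ (1 - d⁻¹) * s := by
  have : d⁻¹ * s ≤ a := by rwa [inv_mul_le_iff₀ hd]
  linarith [one_sub_mul d⁻¹ s]

theorem le_prod_one_sub_inv_mul_sum_Icc (a D : ℕ → 𝕜) (hD : ∀ N, 1 ≤ D N)
    (hsum : ∀ ℓ N : ℕ, ∑ j ∈ Icc ℓ (ℓ + N), a j ≤ D N * a ℓ) (k ℓ : ℕ) :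
    a (ℓ + k) ≤ (∏ j ∈ Icc 1 k, (1 - (D j)⁻¹)) * ∑ j ∈ Icc ℓ (ℓ + k), a j := by
  induction k generalizing ℓ with
  | zero => simp
  | succ k ih =>
    have hfactor (j : ℕ) : 0 ≤ 1 - (D j)⁻¹ := sub_nonneg.2 (inv_le_one_of_one_le₀ (hD j))
    have htail : ∑ j ∈ Icc (ℓ + 1) (ℓ + 1 + k), a j ≤
        (1 - (D (k + 1))⁻¹) * ∑ j ∈ Icc ℓ (ℓ + (k + 1)), a j := by
      have h :=
        sub_le_one_sub_inv_mul_of_le_mul (zero_lt_one.trans_le (hD (k + 1))) (hsum ℓ (k + 1))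
      rwa [sum_Icc_eq_add_sum_Icc_succ a ℓ k, add_sub_cancel_left,
        ← sum_Icc_eq_add_sum_Icc_succ] at h
    calc a (ℓ + (k + 1)) = a (ℓ + 1 + k) := by rw [add_right_comm, add_assoc]
      _ ≤ (∏ j ∈ Icc 1 k, (1 - (D j)⁻¹)) * ∑ j ∈ Icc (ℓ + 1) (ℓ + 1 + k), a j := ih (ℓ + 1)
      _ ≤ (∏ j ∈ Icc 1 k, (1 - (D j)⁻¹)) *
          ((1 - (D (k + 1))⁻¹) * ∑ j ∈ Icc ℓ (ℓ + (k + 1)), a j) :=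
        mul_le_mul_of_nonneg_left htail (prod_nonneg fun j _ => hfactor j)
      _ = (∏ j ∈ Icc 1 (k + 1), (1 - (D j)⁻¹)) * ∑ j ∈ Icc ℓ (ℓ + (k + 1)), a j := by
        rw [prod_Icc_succ_top (by omega), mul_assoc]

end

theorem stmt_1_general (η : ℕ → ℝ)
    (D : ℕ → ℝ) (hD : ∀ N, 1 < D N)
    (hsum : ∀ ℓ N : ℕ, ∑ k ∈ Finset.Icc ℓ (ℓ + N), (η k) ^ 2 ≤ D N * (η ℓ) ^ 2) :
    ∀ k ℓ : ℕ, (η (ℓ + k)) ^ 2 ≤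
      (∏ j ∈ Finset.Icc 1 k, (1 - (D j)⁻¹)) * ∑ j ∈ Finset.Icc ℓ (ℓ + k), (η j) ^ 2 :=
  le_prod_one_sub_inv_mul_sum_Icc (fun j => η j ^ 2) D (fun N => (hD N).le) hsum

/-- induction step in Lemma `lem:Nsum`: from the summed estimator
bound one obtains the product bound, where the empty product (`k = 0`) equals `1`. -/
theorem stmt_1 (η : ℕ → ℝ) (hη : ∀ ℓ, 0 ≤ η ℓ)
    (D : ℕ → ℝ) (hD : ∀ N, 1 < D N)
    (hsum : ∀ ℓ N : ℕ, ∑ k ∈ Finset.Icc ℓ (ℓ + N), (η k) ^ 2 ≤ D N * (η ℓ) ^ 2) :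
    ∀ k ℓ : ℕ, (η (ℓ + k)) ^ 2 ≤
      (∏ j ∈ Finset.Icc 1 k, (1 - (D j)⁻¹)) * ∑ j ∈ Finset.Icc ℓ (ℓ + k), (η j) ^ 2 :=
  stmt_1_general η D hD hsum
end

section
/- Suppose sequences $(\eta_\ell)$ and $(e_\ell)$ of nonnegative reals satisfy estimator reduction $\eta_{\ell+1}^2 \le \kappa\eta_\ell^2 + C_{\rm est} d_\ell^2$ with $0<\kappa<1$, reliability $e_\ell \le C_{\rm rel}\eta_\ell$, and quasi-orthogonality $\sum_{k=\ell}^{\ell+N} d_k^2 \le C(N) e_\ell^2$ for all $\ell,N$, where $d_k \ge 0$. Then $\sum_{k=\ell}^{\ell+N}\eta_k^2 \le D(N)\eta_\ell^2$ with $D(N) = 1 + \frac{\kappa + C_{\rm est}C(N-1)C_{\rm rel}^2}{1-\kappa}$. -/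
open Finset

/-!
Summing estimator reduction over `k = ℓ, …, ℓ + N - 1` bounds the tail
`∑_{k=ℓ+1}^{ℓ+N} η_k²` by `κ ∑_{k=ℓ}^{ℓ+N} η_k² + C_est ∑_{k=ℓ}^{ℓ+N-1} d_k²`, so the full sum `S`
satisfies `(1 - κ) S ≤ η_ℓ² + C_est ∑ d_k²`. Quasi-orthogonality and reliability bound the last
sum by `C(N-1) C_rel² η_ℓ²`, and `D(N) = (1 + C_est C(N-1) C_rel²) / (1 - κ)`.
-/

theorem sum_Icc_add_succ_eq_add_sum_shift {M : Type*} [AddCommMonoid M] (f : ℕ → M) (ℓ N : ℕ) :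
    ∑ k ∈ Icc ℓ (ℓ + (N + 1)), f k = f ℓ + ∑ k ∈ Icc ℓ (ℓ + N), f (k + 1) := by
  rw [← insert_Icc_add_one_left_eq_Icc (by omega), sum_insert (by simp), ← add_assoc,
    ← map_add_right_Icc, sum_map]
  rfl

theorem one_sub_mul_sum_Icc_le_of_le_mul_add {a b : ℕ → ℝ} {κ : ℝ} (hκ : 0 ≤ κ)
    (ha : ∀ k, 0 ≤ a k) (hab : ∀ k, a (k + 1) ≤ κ * a k + b k) (ℓ N : ℕ) :
    (1 - κ) * ∑ k ∈ Icc ℓ (ℓ + (N + 1)), a k ≤ a ℓ + ∑ k ∈ Icc ℓ (ℓ + N), b k := by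
  set S := ∑ k ∈ Icc ℓ (ℓ + (N + 1)), a k
  have hpartial : ∑ k ∈ Icc ℓ (ℓ + N), a k ≤ S :=
    sum_le_sum_of_subset_of_nonneg (Icc_subset_Icc_right (by omega)) fun k _ _ => ha k
  have hshift : ∑ k ∈ Icc ℓ (ℓ + N), a (k + 1) ≤ κ * S + ∑ k ∈ Icc ℓ (ℓ + N), b k :=
    calc ∑ k ∈ Icc ℓ (ℓ + N), a (k + 1)
        ≤ ∑ k ∈ Icc ℓ (ℓ + N), (κ * a k + b k) := sum_le_sum fun k _ => hab k
      _ = κ * ∑ k ∈ Icc ℓ (ℓ + N), a k + ∑ k ∈ Icc ℓ (ℓ + N), b k := by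
        rw [sum_add_distrib, mul_sum]
      _ ≤ κ * S + ∑ k ∈ Icc ℓ (ℓ + N), b k := by gcongr
  have hS : S = a ℓ + ∑ k ∈ Icc ℓ (ℓ + N), a (k + 1) := sum_Icc_add_succ_eq_add_sum_shift a ℓ N
  linarith

theorem stmt_2_general (η e d : ℕ → ℝ)
    (he : ∀ ℓ, 0 ≤ e ℓ)
    (κ Cest Crel : ℝ) (hκ0 : 0 < κ) (hκ1 : κ < 1) (hCest : 0 < Cest)
    (C : ℕ → ℝ) (hC : ∀ N, 0 ≤ C N)
    (hred : ∀ ℓ : ℕ, (η (ℓ + 1)) ^ 2 ≤ κ * (η ℓ) ^ 2 + Cest * (d ℓ) ^ 2)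
    (hrel : ∀ ℓ : ℕ, e ℓ ≤ Crel * η ℓ)
    (hqo : ∀ ℓ N : ℕ, ∑ k ∈ Finset.Icc ℓ (ℓ + N), (d k) ^ 2 ≤ C N * (e ℓ) ^ 2) :
    ∀ ℓ N : ℕ, 1 ≤ N →
      ∑ k ∈ Finset.Icc ℓ (ℓ + N), (η k) ^ 2 ≤
        (1 + (κ + Cest * C (N - 1) * Crel ^ 2) / (1 - κ)) * (η ℓ) ^ 2 := by
  intro ℓ N hN
  obtain ⟨M, rfl⟩ : ∃ M, N = M + 1 := ⟨N - 1, by omega⟩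
  have hsum := one_sub_mul_sum_Icc_le_of_le_mul_add hκ0.le (fun k => sq_nonneg (η k)) hred ℓ M
  have hrel_sq : e ℓ ^ 2 ≤ Crel ^ 2 * η ℓ ^ 2 := by
    rw [← mul_pow]
    exact pow_le_pow_left₀ (he ℓ) (hrel ℓ) 2
  have hdiff : ∑ k ∈ Icc ℓ (ℓ + M), Cest * d k ^ 2 ≤ Cest * C M * Crel ^ 2 * η ℓ ^ 2 :=
    calc ∑ k ∈ Icc ℓ (ℓ + M), Cest * d k ^ 2 = Cest * ∑ k ∈ Icc ℓ (ℓ + M), d k ^ 2 := by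
          rw [mul_sum]
      _ ≤ Cest * (C M * e ℓ ^ 2) := by gcongr; exact hqo ℓ M
      _ ≤ Cest * (C M * (Crel ^ 2 * η ℓ ^ 2)) := by gcongr; exact hC M
      _ = Cest * C M * Crel ^ 2 * η ℓ ^ 2 := by ring
  have h1κ : 0 < 1 - κ := sub_pos.2 hκ1
  have hD : 1 + (κ + Cest * C M * Crel ^ 2) / (1 - κ)
      = (1 + Cest * C M * Crel ^ 2) / (1 - κ) := by
    field_simp
    ring
  rw [Nat.add_sub_cancel, hD, div_mul_eq_mul_div, le_div_iff₀ h1κ]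
  linarith

/-- Lemma `lem:Nsum0`: estimator reduction, reliability, and
quasi-orthogonality imply the summed estimator bound with
`D(N) = 1 + (κ + C_est C(N-1) C_rel²)/(1-κ)`. -/
theorem stmt_2 (η e d : ℕ → ℝ)
    (hη : ∀ ℓ, 0 ≤ η ℓ) (he : ∀ ℓ, 0 ≤ e ℓ) (hd : ∀ ℓ, 0 ≤ d ℓ)
    (κ Cest Crel : ℝ) (hκ0 : 0 < κ) (hκ1 : κ < 1) (hCest : 0 < Cest) (hCrel : 0 < Crel)
    (C : ℕ → ℝ) (hC : ∀ N, 0 ≤ C N)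
    (hred : ∀ ℓ : ℕ, (η (ℓ + 1)) ^ 2 ≤ κ * (η ℓ) ^ 2 + Cest * (d ℓ) ^ 2)
    (hrel : ∀ ℓ : ℕ, e ℓ ≤ Crel * η ℓ)
    (hqo : ∀ ℓ N : ℕ, ∑ k ∈ Finset.Icc ℓ (ℓ + N), (d k) ^ 2 ≤ C N * (e ℓ) ^ 2) :
    ∀ ℓ N : ℕ, 1 ≤ N →
      ∑ k ∈ Finset.Icc ℓ (ℓ + N), (η k) ^ 2 ≤
        (1 + (κ + Cest * C (N - 1) * Crel ^ 2) / (1 - κ)) * (η ℓ) ^ 2 :=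
  stmt_2_general η e d he κ Cest Crel hκ0 hκ1 hCest C hC hred hrel hqo
end

section
/- The upper-triangular truncation $\mathcal{U}$ satisfies the identity $\mathcal{U}(M)^T\mathcal{U}(M) = \mathcal{U}(\mathcal{U}(M)^T M) + \mathcal{L}(M^T\mathcal{U}(M))$ for every $M\in\mathbb{R}^{n\times n}$, where $\mathcal{L}(A) = A - \mathcal{U}(A)$ is the strictly-lower-triangular truncation. -/
open Matrix

/-- Upper-triangular truncation: keep entries with `i ≤ j`, set the rest to zero. -/
def triu {n : ℕ} (M : Matrix (Fin n) (Fin n) ℝ) : Matrix (Fin n) (Fin n) ℝ :=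
  Matrix.of fun i j => if i ≤ j then M i j else 0

/-- Strictly-lower-triangular truncation `ℒ(M) = M - 𝒰(M)`. -/
def tril {n : ℕ} (M : Matrix (Fin n) (Fin n) ℝ) : Matrix (Fin n) (Fin n) ℝ :=
  M - triu M

/-- `𝒰(M)ᵀ 𝒰(M) = 𝒰(𝒰(M)ᵀ M) + ℒ(Mᵀ 𝒰(M))`. -/
theorem stmt_5 (n : ℕ) (M : Matrix (Fin n) (Fin n) ℝ) :
    (triu M)ᵀ * triu M = triu ((triu M)ᵀ * M) + tril (Mᵀ * triu M) := by
  ext i j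
  simp only [triu, tril, Matrix.add_apply, Matrix.sub_apply, Matrix.mul_apply,
    Matrix.transpose_apply, Matrix.of_apply]
  by_cases h : i ≤ j
  · simp only [if_pos h]
    have : ∀ k : Fin n, (if k ≤ j then M k i else 0) * M k j -
        M k i * (if k ≤ j then M k j else 0) = 0 := by
      intro k; split <;> ring
    rw [show (∑ k, M k i * if k ≤ j then M k j else 0) =
        ∑ k, (if k ≤ j then M k i else 0) * M k j by
      apply Finset.sum_congr rfl; intro k _
      have := this k; linarith]
    ring_nf
    apply Finset.sum_congr rfl
    intro k _
    by_cases hk : k ≤ i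
    · simp [hk, hk.trans h]
    · simp [hk]
  · simp only [if_neg h]
    ring_nf
    apply Finset.sum_congr rfl
    intro k _
    by_cases hk : k ≤ j
    · have : k ≤ i := hk.trans (le_of_not_ge h)
      simp [hk, this]
    · simp [hk]
end

section
/- For the upper-triangular truncation $\mathcal{U}$ on $n\times n$ real matrices, there holds $\|\mathcal{U}(M)\|_2 \le (\lceil \log_2 n \rceil + 1)\|M\|_2$ for all $M \in \mathbb{R}^{n\times n}$, where $\|\cdot\|_2$ is the spectral (operator) norm. -/
/-!
Index rows and columns in binary. Two indices `i < j` are separated at a unique level `k`, the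
highest bit in which they differ: `i` lies in the left and `j` in the right half of a common dyadic
block of size `2 ^ (k + 1)`. So the strictly upper triangular part of `M` is the sum, over the
`⌈log₂ n⌉` levels, of the matrices keeping only these upper-right half blocks. The diagonal of `M`
is a pinching of `M` (its compression to a family of disjoint row/column blocks) and each level is
a row projection of one; pinching does not increase the spectral norm.
-/

open Matrix

noncomputable def specNorm {m n : ℕ} (M : Matrix (Fin m) (Fin n) ℝ) : ℝ :=
  ‖LinearMap.toContinuousLinearMap (Matrix.toEuclideanLin M)‖

def IsDyadicSplit (k i j : ℕ) : Prop := Even (i / 2 ^ k) ∧ i / 2 ^ k + 1 = j / 2 ^ k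

instance (k i j : ℕ) : Decidable (IsDyadicSplit k i j) := inferInstanceAs (Decidable (_ ∧ _))

namespace IsDyadicSplit

variable {k i j : ℕ}

theorem lt (h : IsDyadicSplit k i j) : i < j := by
  by_contra! hji
  have := Nat.div_le_div_right (c := 2 ^ k) hji
  have := h.2
  omega

theorem div_eq_div_of_lt {k' : ℕ} (h : IsDyadicSplit k i j) (hk : k < k') :
    i / 2 ^ k' = j / 2 ^ k' := by
  obtain ⟨d, rfl⟩ := Nat.exists_eq_add_of_lt hk
  have hhalf : i / 2 ^ k / 2 = j / 2 ^ k / 2 := by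
    obtain ⟨⟨q, hq⟩, hj⟩ := h
    omega
  rw [show k + d + 1 = k + 1 + d by ring, pow_add, pow_succ, ← Nat.div_div_eq_div_mul,
    ← Nat.div_div_eq_div_mul, ← Nat.div_div_eq_div_mul, ← Nat.div_div_eq_div_mul, hhalf]

theorem unique {k' : ℕ} (h : IsDyadicSplit k i j) (h' : IsDyadicSplit k' i j) : k = k' := by
  by_contra hne
  rcases Nat.lt_or_gt_of_ne hne with hk | hk
  · have := h.div_eq_div_of_lt hk
    have := h'.2
    omega
  · have := h'.div_eq_div_of_lt hk
    have := h.2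
    omega

theorem lt_of_lt_two_pow {L : ℕ} (h : IsDyadicSplit k i j) (hj : j < 2 ^ L) : k < L := by
  have hk : 2 ^ k ≤ j := (Nat.one_le_div_iff (Nat.two_pow_pos k)).mp (h.2 ▸ Nat.le_add_left 1 _)
  exact (Nat.pow_lt_pow_iff_right (by norm_num)).mp (hk.trans_lt hj)

end IsDyadicSplit

theorem exists_isDyadicSplit {i j : ℕ} (hij : i < j) : ∃ k, IsDyadicSplit k i j := by
  induction j using Nat.strong_induction_on generalizing i with
  | _ j ih =>
    rcases eq_or_lt_of_le (Nat.div_le_div_right (c := 2) hij.le) with hhalf | hhalf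
    · exact ⟨0, by simp only [IsDyadicSplit, pow_zero, Nat.div_one, Nat.even_iff]; omega⟩
    · obtain ⟨k, hk⟩ := ih (j / 2) (by omega) hhalf
      refine ⟨k + 1, ?_⟩
      simpa only [IsDyadicSplit, pow_succ', ← Nat.div_div_eq_div_mul] using hk

theorem sum_range_ite_isDyadicSplit {α : Type*} [AddCommMonoid α] {L i j : ℕ} (hj : j < 2 ^ L)
    (a : α) : ∑ k ∈ Finset.range L, (if IsDyadicSplit k i j then a else 0) =
      if i < j then a else 0 := by
  split_ifs with hij
  · obtain ⟨k, hk⟩ := exists_isDyadicSplit hij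
    rw [Finset.sum_eq_single_of_mem k (Finset.mem_range.mpr (hk.lt_of_lt_two_pow hj)), if_pos hk]
    exact fun k' _ hne => if_neg fun hk' => hne (hk'.unique hk)
  · exact Finset.sum_eq_zero fun k _ => if_neg fun hk => hij hk.lt

open scoped Matrix.Norms.L2Operator

section Pinching

variable {𝕜 m n κ : Type*} [RCLike 𝕜] [DecidableEq κ]

def pinching (r : m → κ) (c : n → κ) (A : Matrix m n 𝕜) : Matrix m n 𝕜 :=
  of fun i j => if r i = c j then A i j else 0

theorem pinching_mulVec [Fintype n] (r : m → κ) (c : n → κ) (A : Matrix m n 𝕜) (x : n → 𝕜)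
    (i : m) : (pinching r c A *ᵥ x) i = (A *ᵥ fun j => if c j = r i then x j else 0) i := by
  simp only [mulVec, dotProduct, pinching, of_apply, ite_mul, mul_ite, zero_mul, mul_zero, eq_comm]

theorem pinching_id_id [DecidableEq n] (A : Matrix n n 𝕜) :
    pinching id id A = diagonal A.diag := by
  ext i j
  rcases eq_or_ne i j with rfl | h <;> simp [pinching, *]

variable [Fintype m] [Fintype n] [DecidableEq n]

theorem sum_norm_sq_mulVec_le (A : Matrix m n 𝕜) (x : n → 𝕜) :
    ∑ i, ‖(A *ᵥ x) i‖ ^ 2 ≤ ‖A‖ ^ 2 * ∑ j, ‖x j‖ ^ 2 := by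
  have h := (toEuclideanLin.trans LinearMap.toContinuousLinearMap A).le_opNorm (WithLp.toLp 2 x)
  have h2 := pow_le_pow_left₀ (norm_nonneg _) h 2
  rwa [mul_pow, EuclideanSpace.norm_sq_eq, EuclideanSpace.norm_sq_eq] at h2

theorem l2_opNorm_le_of_sum_norm_sq_mulVec_le {A : Matrix m n 𝕜} {C : ℝ} (hC : 0 ≤ C)
    (h : ∀ x, ∑ i, ‖(A *ᵥ x) i‖ ^ 2 ≤ C ^ 2 * ∑ j, ‖x j‖ ^ 2) : ‖A‖ ≤ C := by
  rw [l2_opNorm_def]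
  refine ContinuousLinearMap.opNorm_le_bound _ hC fun x => ?_
  rw [← pow_le_pow_iff_left₀ (norm_nonneg _) (by positivity) two_ne_zero, mul_pow,
    EuclideanSpace.norm_sq_eq, EuclideanSpace.norm_sq_eq]
  exact h x

/- Row `i` of the pinching only sees the part `y (r i)` of `x` on the columns labelled `r i`; these
parts have disjoint supports, so their squared norms add up to at most `‖x‖ ^ 2`. -/
theorem l2_opNorm_pinching_le (r : m → κ) (c : n → κ) (A : Matrix m n 𝕜) :
    ‖pinching r c A‖ ≤ ‖A‖ := by
  refine l2_opNorm_le_of_sum_norm_sq_mulVec_le (norm_nonneg A) fun x => ?_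
  set S := Finset.univ.image r
  set y : κ → n → 𝕜 := fun p j => if c j = p then x j else 0
  have hy : ∀ j, ∑ p ∈ S, ‖y p j‖ ^ 2 ≤ ‖x j‖ ^ 2 := fun j => by
    simp only [y, apply_ite (‖·‖ ^ 2), norm_zero, zero_pow two_ne_zero, Finset.sum_ite_eq]
    split_ifs <;> [exact le_rfl; positivity]
  calc ∑ i, ‖(pinching r c A *ᵥ x) i‖ ^ 2
      = ∑ p ∈ S, ∑ i with r i = p, ‖(A *ᵥ y (r i)) i‖ ^ 2 := by
        simp only [pinching_mulVec]
        rw [Finset.sum_fiberwise_of_maps_to fun i _ => Finset.mem_image_of_mem r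
          (Finset.mem_univ i)]
    _ ≤ ∑ p ∈ S, ∑ i, ‖(A *ᵥ y p) i‖ ^ 2 := by
        refine Finset.sum_le_sum fun p _ => ?_
        refine (Finset.sum_congr rfl fun i hi => ?_).trans_le
          (Finset.sum_le_sum_of_subset_of_nonneg (Finset.filter_subset _ _)
            fun _ _ _ => by positivity)
        rw [(Finset.mem_filter.mp hi).2]
    _ ≤ ∑ p ∈ S, ‖A‖ ^ 2 * ∑ j, ‖y p j‖ ^ 2 :=
        Finset.sum_le_sum fun p _ => sum_norm_sq_mulVec_le A (y p)
    _ = ‖A‖ ^ 2 * ∑ j, ∑ p ∈ S, ‖y p j‖ ^ 2 := by rw [← Finset.mul_sum, Finset.sum_comm]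
    _ ≤ ‖A‖ ^ 2 * ∑ j, ‖x j‖ ^ 2 := by gcongr with j; exact hy j

theorem l2_opNorm_diagonal_diag_le (A : Matrix n n 𝕜) : ‖diagonal A.diag‖ ≤ ‖A‖ :=
  pinching_id_id A ▸ l2_opNorm_pinching_le id id A

end Pinching

section Dyadic

variable {𝕜 : Type*} [RCLike 𝕜] {m n : ℕ}

def dyadicPart (k : ℕ) (A : Matrix (Fin m) (Fin n) 𝕜) : Matrix (Fin m) (Fin n) 𝕜 :=
  of fun i j => if IsDyadicSplit k i j then A i j else 0

theorem dyadicPart_eq_diagonal_mul_pinching (k : ℕ) (A : Matrix (Fin m) (Fin n) 𝕜) :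
    dyadicPart k A = diagonal (fun i : Fin m => if Even ((i : ℕ) / 2 ^ k) then (1 : 𝕜) else 0) *
      pinching (fun i : Fin m => (i : ℕ) / 2 ^ k + 1) (fun j : Fin n => (j : ℕ) / 2 ^ k) A := by
  ext i j
  by_cases he : Even ((i : ℕ) / 2 ^ k) <;> simp [dyadicPart, IsDyadicSplit, pinching, he]

theorem l2_opNorm_dyadicPart_le (k : ℕ) (A : Matrix (Fin m) (Fin n) 𝕜) :
    ‖dyadicPart k A‖ ≤ ‖A‖ := by
  rw [dyadicPart_eq_diagonal_mul_pinching]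
  refine (l2_opNorm_mul _ _).trans ?_
  have hdiag :
      ‖(diagonal fun i : Fin m => if Even ((i : ℕ) / 2 ^ k) then (1 : 𝕜) else 0)‖ ≤ 1 := by
    rw [l2_opNorm_diagonal, pi_norm_le_iff_of_nonneg zero_le_one]
    intro i
    split_ifs <;> simp
  calc _ ≤ 1 * ‖A‖ := mul_le_mul hdiag (l2_opNorm_pinching_le _ _ A) (norm_nonneg _) zero_le_one
    _ = ‖A‖ := one_mul _

end Dyadic

theorem specNorm_eq_l2_opNorm {m n : ℕ} (M : Matrix (Fin m) (Fin n) ℝ) : specNorm M = ‖M‖ := rfl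

theorem triu_eq_diagonal_add_sum_dyadicPart {n L : ℕ} (hn : n ≤ 2 ^ L)
    (M : Matrix (Fin n) (Fin n) ℝ) :
    triu M = diagonal M.diag + ∑ k ∈ Finset.range L, dyadicPart k M := by
  ext i j
  simp only [triu, dyadicPart, Matrix.add_apply, Matrix.sum_apply, diagonal_apply, diag_apply,
    of_apply, sum_range_ite_isDyadicSplit (j.isLt.trans_le hn)]
  rcases lt_trichotomy i j with h | rfl | h
  · simp [h.le, h.ne, h]
  · simp
  · simp [not_le.mpr h, not_lt.mpr h.le, h.ne']

/-- `‖𝒰(M)‖₂ ≤ (⌈log₂ n⌉ + 1) ‖M‖₂`. -/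
theorem stmt_6 (n : ℕ) (M : Matrix (Fin n) (Fin n) ℝ) :
    specNorm (triu M) ≤ ((⌈Real.logb 2 (n : ℝ)⌉ : ℝ) + 1) * specNorm M := by
  have hceil : (⌈Real.logb 2 (n : ℝ)⌉ : ℝ) = Nat.clog 2 n := by
    rw [show (2 : ℝ) = (2 : ℕ) by norm_num, Real.ceil_logb_natCast n.cast_nonneg,
      Int.clog_natCast, Int.cast_natCast]
  rw [specNorm_eq_l2_opNorm, specNorm_eq_l2_opNorm, hceil,
    triu_eq_diagonal_add_sum_dyadicPart (Nat.le_pow_clog one_lt_two n)]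
  calc _ ≤ ‖diagonal M.diag‖ + ∑ k ∈ Finset.range (Nat.clog 2 n), ‖dyadicPart k M‖ :=
        (norm_add_le _ _).trans (add_le_add le_rfl (norm_sum_le _ _))
    _ ≤ ‖M‖ + ∑ _k ∈ Finset.range (Nat.clog 2 n), ‖M‖ := by
        gcongr with k
        · exact l2_opNorm_diagonal_diag_le M
        · exact l2_opNorm_dyadicPart_le k M
    _ = (Nat.clog 2 n + 1) * ‖M‖ := by
        rw [Finset.sum_const, Finset.card_range, nsmul_eq_mul]
        ring
end

section
/- Let $M\in\mathbb{R}^{n\times n}$ be such that $\max_{1\le j\le n}\|I_j - \alpha M|_{j\times j} M|_{j\times j}^T\|_2 < 1$ for some $\alpha>0$, where $M|_{j\times j}$ denotes the upper-left $j\times j$ principal submatrix. Then all principal submatrices are invertible, $M$ has a normalized $LU$-factorization $M = LU$, and $(M|_{j\times j})^{-1} = \alpha M|_{j\times j}^T \left(I_j + \sum_{m=1}^\infty (I_j - \alpha M|_{j\times j}M|_{j\times j}^T)^m\right)$, where the Neumann series converges in spectral norm. -/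
open Matrix

/-- The upper-left `j × j` principal submatrix of `M`. -/
def psub {n : ℕ} (M : Matrix (Fin n) (Fin n) ℝ) (j : ℕ) (h : j ≤ n) :
    Matrix (Fin j) (Fin j) ℝ :=
  Matrix.of fun a b => M (Fin.castLE h a) (Fin.castLE h b)

/-- `L` is lower triangular. -/
def LowerTri {n : ℕ} (L : Matrix (Fin n) (Fin n) ℝ) : Prop :=
  ∀ i j : Fin n, i < j → L i j = 0

/-- `U` is upper triangular. -/
def UpperTri {n : ℕ} (U : Matrix (Fin n) (Fin n) ℝ) : Prop :=
  ∀ i j : Fin n, j < i → U i j = 0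

section aux
open scoped Matrix.Norms.L2Operator

lemma specNorm_eq_norm {j : ℕ} (A : Matrix (Fin j) (Fin j) ℝ) : specNorm A = ‖A‖ := rfl

lemma specNorm_lt_one_zero (X : Matrix (Fin 0) (Fin 0) ℝ) : specNorm X < 1 := by
  have hX : X = 0 := by ext i; exact i.elim0
  rw [specNorm_eq_norm, hX, norm_zero]; norm_num

lemma neumann {j : ℕ} (A : Matrix (Fin j) (Fin j) ℝ) {α : ℝ}
    (h : specNorm (1 - α • (A * Aᵀ)) < 1) :
    IsUnit A ∧ Summable (fun m : ℕ => (1 - α • (A * Aᵀ)) ^ (m + 1)) ∧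
    A⁻¹ = α • Aᵀ * (1 + ∑' m : ℕ, (1 - α • (A * Aᵀ)) ^ (m + 1)) := by
  set B := 1 - α • (A * Aᵀ) with hB
  rw [specNorm_eq_norm] at h
  have hsum1 : Summable (fun m : ℕ => B ^ m) := summable_geometric_of_norm_lt_one h
  have hsum : Summable (fun m : ℕ => B ^ (m + 1)) := (summable_nat_add_iff 1).2 hsum1
  have hT : (1 : Matrix (Fin j) (Fin j) ℝ) + ∑' m : ℕ, B ^ (m + 1) = ∑' m : ℕ, B ^ m := by
    rw [geom_series_succ B h]; abel
  have key : A * (α • Aᵀ * (1 + ∑' m : ℕ, B ^ (m + 1))) = 1 := by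
    have h1 : (1 - B) * ∑' m : ℕ, B ^ m = 1 := mul_neg_geom_series B h
    have h2 : (1 : Matrix (Fin j) (Fin j) ℝ) - B = α • (A * Aᵀ) := by
      exact sub_sub_cancel 1 _
    calc A * (α • Aᵀ * (1 + ∑' m : ℕ, B ^ (m + 1)))
        = (α • (A * Aᵀ)) * (1 + ∑' m : ℕ, B ^ (m + 1)) := by
          rw [smul_mul_assoc, smul_mul_assoc, mul_assoc, mul_smul_comm]
      _ = (1 - B) * ∑' m : ℕ, B ^ m := by rw [h2, hT]
      _ = 1 := h1
  refine ⟨⟨⟨A, _, key, mul_eq_one_comm.mp key⟩, rfl⟩, hsum, Matrix.inv_eq_right_inv key⟩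

end aux


lemma lowerTri_det_one {n : ℕ} {L : Matrix (Fin n) (Fin n) ℝ} (hL : LowerTri L)
    (hd : ∀ i, L i i = 1) : L.det = 1 := by
  rw [Matrix.det_of_lowerTriangular L (fun i j hij => hL i j hij)]
  simp [hd]

lemma lu_exists : ∀ (n : ℕ) (M : Matrix (Fin n) (Fin n) ℝ),
    (∀ (j : ℕ) (h : j ≤ n), IsUnit (psub M j h)) →
    ∃ L U : Matrix (Fin n) (Fin n) ℝ,
      LowerTri L ∧ (∀ i, L i i = 1) ∧ UpperTri U ∧ M = L * U := by
  intro n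
  induction n with
  | zero =>
    intro M _
    exact ⟨1, 1, fun i => i.elim0, fun i => i.elim0, fun i => i.elim0,
      by ext i; exact i.elim0⟩
  | succ n ih =>
    intro M hinv
    set A : Matrix (Fin n) (Fin n) ℝ := psub M n (Nat.le_succ n) with hAdef
    have hA : ∀ (j : ℕ) (h : j ≤ n), IsUnit (psub A j h) := by
      intro j h
      have : psub A j h = psub M j (h.trans (Nat.le_succ n)) := by
        ext a b
        simp [psub, hAdef, Fin.castLE_castLE]
      rw [this]; exact hinv j _
    obtain ⟨L₀, U₀, hL₀, hLd, hU₀, hfac⟩ := ih A hA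
    have hAu : IsUnit A := hinv n (Nat.le_succ n)
    have hL₀det : L₀.det = 1 := lowerTri_det_one hL₀ hLd
    have hU₀det : IsUnit U₀.det := by
      have := (Matrix.isUnit_iff_isUnit_det A).mp hAu
      rw [hfac, Matrix.det_mul, hL₀det, one_mul] at this
      exact this
    have hL₀det' : IsUnit L₀.det := by rw [hL₀det]; exact isUnit_one
    -- data
    set b : Fin n → ℝ := fun i => M (Fin.castSucc i) (Fin.last n) with hbdef
    set c : Fin n → ℝ := fun j => M (Fin.last n) (Fin.castSucc j) with hcdef
    set y : Fin n → ℝ := L₀⁻¹ *ᵥ b with hydef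
    set x : Fin n → ℝ := Matrix.vecMul c U₀⁻¹ with hxdef
    have hy : L₀ *ᵥ y = b := by
      rw [hydef, Matrix.mulVec_mulVec, Matrix.mul_nonsing_inv _ hL₀det', Matrix.one_mulVec]
    have hx : Matrix.vecMul x U₀ = c := by
      rw [hxdef, Matrix.vecMul_vecMul, Matrix.nonsing_inv_mul _ hU₀det, Matrix.vecMul_one]
    set s : ℝ := M (Fin.last n) (Fin.last n) - x ⬝ᵥ y with hsdef
    set L : Matrix (Fin (n+1)) (Fin (n+1)) ℝ := Matrix.of fun i j =>
      if hi : (i : ℕ) < n then (if hj : (j : ℕ) < n then L₀ ⟨i, hi⟩ ⟨j, hj⟩ else 0)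
      else (if hj : (j : ℕ) < n then x ⟨j, hj⟩ else 1) with hLdef
    set U : Matrix (Fin (n+1)) (Fin (n+1)) ℝ := Matrix.of fun i j =>
      if hi : (i : ℕ) < n then (if hj : (j : ℕ) < n then U₀ ⟨i, hi⟩ ⟨j, hj⟩ else y ⟨i, hi⟩)
      else (if (j : ℕ) < n then 0 else s) with hUdef
    have hlast : ∀ k : Fin (n+1), ¬ (k : ℕ) < n → k = Fin.last n := by
      intro k hk
      exact Fin.ext (le_antisymm (Nat.lt_succ_iff.mp k.isLt) (Nat.le_of_not_lt hk))
    refine ⟨L, U, ?_, ?_, ?_, ?_⟩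
    · intro i j hij
      simp only [hLdef, Matrix.of_apply]
      by_cases hj : (j : ℕ) < n
      · have hi : (i : ℕ) < n := lt_trans hij hj
        simp only [hi, hj, dif_pos]
        exact hL₀ _ _ hij
      · have hi : (i : ℕ) < n := by
          have := hlast j hj
          subst this
          exact hij
        simp [hi, hj]
    · intro i
      simp only [hLdef, Matrix.of_apply]
      by_cases hi : (i : ℕ) < n
      · simp only [hi, dif_pos]; exact hLd _
      · simp [hi]
    · intro i j hij
      simp only [hUdef, Matrix.of_apply]
      by_cases hi : (i : ℕ) < n
      · have hj : (j : ℕ) < n := lt_trans hij hi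
        simp only [hi, hj, dif_pos]
        exact hU₀ _ _ hij
      · have hj : (j : ℕ) < n := by
          have := hlast i hi
          subst this
          exact hij
        simp [hi, hj]
    · ext i j
      rw [Matrix.mul_apply, Fin.sum_univ_castSucc]
      have hcast : ∀ k : Fin n, ((Fin.castSucc k : Fin (n+1)) : ℕ) < n := fun k => k.isLt
      have hlastn : ¬ ((Fin.last n : Fin (n+1)) : ℕ) < n := by simp
      by_cases hi : (i : ℕ) < n
      · by_cases hj : (j : ℕ) < n
        · have : M i j = A ⟨i, hi⟩ ⟨j, hj⟩ := by
            simp [hAdef, psub]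
          rw [this, hfac, Matrix.mul_apply]
          simp only [hLdef, hUdef, Matrix.of_apply, hcast, hi, hj, hlastn, dif_pos, dif_neg,
            not_lt, if_neg]
          simp
        · have hjl := hlast j hj
          subst hjl
          have : M i (Fin.last n) = b ⟨i, hi⟩ := by
            simp [hbdef]
          rw [this, ← hy, Matrix.mulVec, dotProduct]
          simp only [hLdef, hUdef, Matrix.of_apply, hcast, hi, hlastn, dif_pos, dif_neg]
          simp
      · have hil := hlast i hi
        subst hil
        by_cases hj : (j : ℕ) < n
        · have : M (Fin.last n) j = c ⟨j, hj⟩ := by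
            simp [hcdef]
          rw [this, ← hx, Matrix.vecMul, dotProduct]
          simp only [hLdef, hUdef, Matrix.of_apply, hcast, hj, hlastn, dif_pos, dif_neg]
          simp [mul_comm]
        · have hjl := hlast j hj
          subst hjl
          simp only [hLdef, hUdef, Matrix.of_apply, hcast, hlastn, dif_pos, dif_neg]
          simp [hsdef, dotProduct]

/-- if all principal submatrices satisfy
`‖I - α M|ⱼ M|ⱼᵀ‖₂ < 1`, then they are invertible, `M` has a normalized
`LU`-factorization, and `(M|ⱼ)⁻¹` is given by the (summable) Neumann series. -/
theorem stmt_8 (n : ℕ) (M : Matrix (Fin n) (Fin n) ℝ) (α : ℝ) (hα : 0 < α)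
    (hcontr : ∀ (j : ℕ) (h : j ≤ n), 1 ≤ j →
      specNorm (1 - α • (psub M j h * (psub M j h)ᵀ)) < 1) :
    (∀ (j : ℕ) (h : j ≤ n), IsUnit (psub M j h)) ∧
    (∃ L U : Matrix (Fin n) (Fin n) ℝ,
      LowerTri L ∧ (∀ i, L i i = 1) ∧ UpperTri U ∧ M = L * U) ∧
    ∀ (j : ℕ) (h : j ≤ n),
      Summable (fun m : ℕ => (1 - α • (psub M j h * (psub M j h)ᵀ)) ^ (m + 1)) ∧
      (psub M j h)⁻¹ =
        α • (psub M j h)ᵀ *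
          (1 + ∑' m : ℕ, (1 - α • (psub M j h * (psub M j h)ᵀ)) ^ (m + 1)) := by
  have hall : ∀ (j : ℕ) (h : j ≤ n),
      specNorm (1 - α • (psub M j h * (psub M j h)ᵀ)) < 1 := by
    intro j h
    rcases Nat.eq_zero_or_pos j with rfl | hj
    · exact specNorm_lt_one_zero _
    · exact hcontr j h hj
  have hne := fun (j : ℕ) (h : j ≤ n) => neumann (psub M j h) (hall j h)
  exact ⟨fun j h => (hne j h).1, lu_exists n M (fun j h => (hne j h).1),
    fun j h => ⟨(hne j h).2.1, (hne j h).2.2⟩⟩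
end

section
/- Let $M \in \mathbb{R}^{n\times n}$ have invertible principal submatrices $M|_{j\times j}$ for all $1\le j\le n$, with normalized $LU$-factorization $M = LU$. Then for all $1 \le i \le j \le n$, $(U^{-1})_{ij} = ((M|_{j\times j})^{-1})_{ij}$. -/
open Matrix

lemma sum_castLE_aux {n k : ℕ} (hk : k ≤ n) (f : Fin n → ℝ)
    (hf : ∀ c : Fin n, k ≤ c.1 → f c = 0) :
    ∑ c : Fin n, f c = ∑ c : Fin k, f (Fin.castLE hk c) := by
  classical
  have h1 : ∑ c : Fin k, f (Fin.castLE hk c)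
      = ∑ c ∈ Finset.univ.map (Fin.castLEEmb hk), f c := by
    rw [Finset.sum_map]; rfl
  rw [h1]
  refine (Finset.sum_subset (Finset.subset_univ _) ?_).symm
  intro c _ hcnot
  apply hf
  by_contra h
  push_neg at h
  exact hcnot (Finset.mem_map.2 ⟨⟨c.1, h⟩, Finset.mem_univ _, rfl⟩)

lemma psub_mul_of_lower {n k : ℕ} (hk : k ≤ n) (L B : Matrix (Fin n) (Fin n) ℝ)
    (hL : LowerTri L) : psub (L * B) k hk = psub L k hk * psub B k hk := by
  ext a b
  simp only [psub, Matrix.of_apply, Matrix.mul_apply]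
  refine sum_castLE_aux hk _ fun c hc => ?_
  have hlt : (Fin.castLE hk a : Fin n) < c := by
    rw [Fin.lt_def]; exact lt_of_lt_of_le a.2 hc
  rw [hL _ c hlt, zero_mul]

lemma psub_mul_of_upper {n k : ℕ} (hk : k ≤ n) (A V : Matrix (Fin n) (Fin n) ℝ)
    (hV : UpperTri V) : psub (A * V) k hk = psub A k hk * psub V k hk := by
  ext a b
  simp only [psub, Matrix.of_apply, Matrix.mul_apply]
  refine sum_castLE_aux hk _ fun c hc => ?_
  have hlt : (Fin.castLE hk b : Fin n) < c := by
    rw [Fin.lt_def]; exact lt_of_lt_of_le b.2 hc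
  rw [hV c _ hlt, mul_zero]

lemma psub_lower {n k : ℕ} (hk : k ≤ n) (L : Matrix (Fin n) (Fin n) ℝ)
    (hL : LowerTri L) : LowerTri (psub L k hk) := fun a b hab =>
  hL _ _ (by rw [Fin.lt_def]; exact hab)

lemma psub_upper {n k : ℕ} (hk : k ≤ n) (U : Matrix (Fin n) (Fin n) ℝ)
    (hU : UpperTri U) : UpperTri (psub U k hk) := fun a b hab =>
  hU _ _ (by rw [Fin.lt_def]; exact hab)

lemma lowerTri_iff_blockTriangular {m : ℕ} (L : Matrix (Fin m) (Fin m) ℝ) :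
    LowerTri L ↔ BlockTriangular L (OrderDual.toDual : Fin m → (Fin m)ᵒᵈ) := by
  constructor
  · intro h i j hij; exact h i j hij
  · intro h i j hij; exact h hij

lemma upperTri_iff_blockTriangular {m : ℕ} (U : Matrix (Fin m) (Fin m) ℝ) :
    UpperTri U ↔ BlockTriangular U (id : Fin m → Fin m) := by
  constructor
  · intro h i j hij; exact h i j hij
  · intro h i j hij; exact h hij

lemma lower_det {m : ℕ} (L : Matrix (Fin m) (Fin m) ℝ) (hL : LowerTri L)
    (hd : ∀ i, L i i = 1) : L.det = 1 := by
  rw [Matrix.det_of_lowerTriangular L ((lowerTri_iff_blockTriangular L).1 hL)]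
  simp [hd]

/-- inverse of an invertible lower triangular matrix is lower triangular -/
lemma inv_lowerTri {m : ℕ} (L : Matrix (Fin m) (Fin m) ℝ) (hL : LowerTri L)
    (h : IsUnit L.det) : LowerTri L⁻¹ := by
  haveI := L.invertibleOfIsUnitDet h
  rw [lowerTri_iff_blockTriangular] at hL ⊢
  exact Matrix.blockTriangular_inv_of_blockTriangular hL

lemma inv_upperTri {m : ℕ} (U : Matrix (Fin m) (Fin m) ℝ) (hU : UpperTri U)
    (h : IsUnit U.det) : UpperTri U⁻¹ := by
  haveI := U.invertibleOfIsUnitDet h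
  rw [upperTri_iff_blockTriangular] at hU ⊢
  exact Matrix.blockTriangular_inv_of_blockTriangular hU

/-- identity `eq:luid`: for a normalized `LU`-factorization of a matrix
with invertible principal submatrices, `(U⁻¹)_{ij} = ((M|_{j×j})⁻¹)_{ij}` for `i ≤ j`. -/
theorem stmt_9 (n : ℕ) (M L U : Matrix (Fin n) (Fin n) ℝ)
    (hinv : ∀ (j : ℕ) (h : j ≤ n), 1 ≤ j → IsUnit (psub M j h))
    (hL : LowerTri L) (hLdiag : ∀ i, L i i = 1) (hU : UpperTri U) (hLU : M = L * U) :
    ∀ (i j : Fin n) (hij : i ≤ j),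
      U⁻¹ i j =
        (psub M (j.1 + 1) j.isLt)⁻¹ ⟨i.1, Nat.lt_succ_of_le hij⟩ ⟨j.1, Nat.lt_succ_self _⟩ := by
  intro i j hij
  have hn : 1 ≤ n := Nat.one_le_iff_ne_zero.2 (by rintro rfl; exact j.elim0)
  set k := j.1 + 1 with hkdef
  have hk : k ≤ n := j.isLt
  set Lk := psub L k hk with hLk
  set Uk := psub U k hk with hUk
  set Mk := psub M k hk with hMk
  -- factorization of the principal submatrix
  have hfac : Mk = Lk * Uk := by
    rw [hMk, hLU, psub_mul_of_lower hk L U hL]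
  -- determinants
  have hLkdet : Lk.det = 1 :=
    lower_det Lk (psub_lower hk L hL) (fun a => hLdiag _)
  have hMkunit : IsUnit Mk.det := by
    rw [← Matrix.isUnit_iff_isUnit_det]
    exact hinv k hk (Nat.succ_le_succ (Nat.zero_le _))
  have hUkdet : IsUnit Uk.det := by
    have : Mk.det = Lk.det * Uk.det := by rw [hfac, Matrix.det_mul]
    rw [this, hLkdet, one_mul] at hMkunit
    exact hMkunit
  have hLkunit : IsUnit Lk.det := by rw [hLkdet]; exact isUnit_one
  -- U itself is invertible
  have hMeq : psub M n le_rfl = M := by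
    ext a b; simp [psub, Fin.castLE]
  have hMunit : IsUnit M.det := by
    rw [← Matrix.isUnit_iff_isUnit_det, ← hMeq]
    exact hinv n le_rfl hn
  have hUdet : IsUnit U.det := by
    have hLdet : L.det = 1 := lower_det L hL hLdiag
    have : M.det = L.det * U.det := by rw [hLU, Matrix.det_mul]
    rw [this, hLdet, one_mul] at hMunit
    exact hMunit
  -- U⁻¹ is upper triangular and psub U⁻¹ = Uk⁻¹
  have hUinvTri : UpperTri U⁻¹ := inv_upperTri U hU hUdet
  have hpsubUinv : psub U⁻¹ k hk = Uk⁻¹ := by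
    have h1 : psub (U * U⁻¹) k hk = Uk * psub U⁻¹ k hk :=
      psub_mul_of_upper hk U U⁻¹ hUinvTri
    have h2 : U * U⁻¹ = 1 := Matrix.mul_nonsing_inv U hUdet
    rw [h2] at h1
    have h3 : psub (1 : Matrix (Fin n) (Fin n) ℝ) k hk = 1 := by
      ext a b
      simp only [psub, Matrix.of_apply, Matrix.one_apply]
      by_cases hab : a = b
      · subst hab; simp
      · rw [if_neg, if_neg hab]
        exact fun hc => hab (Fin.castLE_injective hk hc)
    rw [h3] at h1
    exact (Matrix.inv_eq_right_inv h1.symm).symm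
  -- Lk⁻¹ is lower triangular with last diagonal entry equal to 1
  have hLklower : LowerTri Lk := psub_lower hk L hL
  have hLkinvTri : LowerTri Lk⁻¹ := inv_lowerTri Lk hLklower hLkunit
  have hLklast : Lk⁻¹ (Fin.last j.1) (Fin.last j.1) = 1 := by
    have h1 : Lk⁻¹ * Lk = 1 := Matrix.nonsing_inv_mul Lk hLkunit
    have h2 := congrFun (congrFun h1 (Fin.last j.1)) (Fin.last j.1)
    rw [Matrix.mul_apply] at h2
    have h3 : ∑ c : Fin k, Lk⁻¹ (Fin.last j.1) c * Lk c (Fin.last j.1)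
        = Lk⁻¹ (Fin.last j.1) (Fin.last j.1) * Lk (Fin.last j.1) (Fin.last j.1) := by
      refine Finset.sum_eq_single _ (fun c _ hc => ?_) (fun hc => absurd (Finset.mem_univ _) hc)
      have hclt : c < Fin.last j.1 := lt_of_le_of_ne (Fin.le_last c) hc
      rw [hLklower c (Fin.last j.1) hclt, mul_zero]
    rw [h3] at h2
    have h4 : Lk (Fin.last j.1) (Fin.last j.1) = 1 := hLdiag _
    rw [h4, mul_one] at h2
    rw [h2, Matrix.one_apply_eq]
  -- Mk⁻¹ = Uk⁻¹ * Lk⁻¹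
  have hMkinv : Mk⁻¹ = Uk⁻¹ * Lk⁻¹ := by
    rw [hfac, Matrix.mul_inv_rev]
  -- put everything together
  have hi' : (⟨i.1, Nat.lt_succ_of_le hij⟩ : Fin k) = ⟨i.1, Nat.lt_succ_of_le hij⟩ := rfl
  have hjlast : (⟨j.1, Nat.lt_succ_self j.1⟩ : Fin k) = Fin.last j.1 := rfl
  have key : Mk⁻¹ ⟨i.1, Nat.lt_succ_of_le hij⟩ (Fin.last j.1)
      = Uk⁻¹ ⟨i.1, Nat.lt_succ_of_le hij⟩ (Fin.last j.1) := by
    rw [hMkinv, Matrix.mul_apply]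
    have h3 : ∑ c : Fin k, Uk⁻¹ ⟨i.1, Nat.lt_succ_of_le hij⟩ c * Lk⁻¹ c (Fin.last j.1)
        = Uk⁻¹ ⟨i.1, Nat.lt_succ_of_le hij⟩ (Fin.last j.1)
          * Lk⁻¹ (Fin.last j.1) (Fin.last j.1) := by
      refine Finset.sum_eq_single _ (fun c _ hc => ?_) (fun hc => absurd (Finset.mem_univ _) hc)
      have hclt : c < Fin.last j.1 := lt_of_le_of_ne (Fin.le_last c) hc
      rw [hLkinvTri c (Fin.last j.1) hclt, mul_zero]
    rw [h3, hLklast, mul_one]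
  have hcast_i : Fin.castLE hk (⟨i.1, Nat.lt_succ_of_le hij⟩ : Fin k) = i := rfl
  have hcast_j : Fin.castLE hk (Fin.last j.1 : Fin k) = j := rfl
  calc U⁻¹ i j = Uk⁻¹ ⟨i.1, Nat.lt_succ_of_le hij⟩ (Fin.last j.1) := by
        rw [← hpsubUinv]; rfl
    _ = Mk⁻¹ ⟨i.1, Nat.lt_succ_of_le hij⟩ (Fin.last j.1) := key.symm
    _ = (psub M (j.1 + 1) j.isLt)⁻¹ ⟨i.1, Nat.lt_succ_of_le hij⟩ ⟨j.1, Nat.lt_succ_self _⟩ := rfl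
end

section
/- Let $M\in\mathbb{R}^{n\times n}$ satisfy $\|(M|_{j\times j})^{-1}\|_2 \le 1/\gamma$ for all $1\le j\le n$ (in particular all principal submatrices are invertible), and let $M = LU$ be its normalized $LU$-factorization. Then every column of $U^{-1}$ has $\ell_2$-norm at most $1/\gamma$: $\|(U^{-1})_{1:n,j}\|_{\ell_2} \le 1/\gamma$ for all $1\le j\le n$. -/
/-! Write `M_k`, `L_k`, `U_k` for the upper-left `k × k` blocks. Since `U` is upper triangular,
`M_k = L_k U_k` and `(U⁻¹)_k = U_k⁻¹`, so `U_k⁻¹ = M_k⁻¹ L_k`. The last column of the unit lower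
triangular `L_k` is the last unit vector, hence the last column of `U_k⁻¹` is the last column of
`M_k⁻¹`, whose norm is at most `‖M_k⁻¹‖₂ ≤ 1/γ`. With `k = j + 1` this column is, padded with zeros,
the `j`-th column of `U⁻¹`. -/

open Matrix

section Triangular

variable {n : ℕ}

theorem UpperTri.isUpperTriangular {U : Matrix (Fin n) (Fin n) ℝ} (hU : UpperTri U) :
    U.IsUpperTriangular :=
  fun i j h => hU i j h

theorem LowerTri.isLowerTriangular {L : Matrix (Fin n) (Fin n) ℝ} (hL : LowerTri L) :
    L.IsLowerTriangular :=
  fun i j h => hL i j h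

theorem UpperTri.inv {U : Matrix (Fin n) (Fin n) ℝ} (hU : UpperTri U) : UpperTri U⁻¹ := by
  by_cases hdet : IsUnit U.det
  · let _ : Invertible U := U.invertibleOfIsUnitDet hdet
    exact fun i j hij => blockTriangular_inv_of_blockTriangular hU.isUpperTriangular hij
  · intro i j _
    rw [nonsing_inv_apply_not_isUnit U hdet, Matrix.zero_apply]

theorem LowerTri.det_eq_one {L : Matrix (Fin n) (Fin n) ℝ} (hL : LowerTri L)
    (hdiag : ∀ i, L i i = 1) : L.det = 1 := by
  simp [det_of_isLowerTriangular L hL.isLowerTriangular, hdiag]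

end Triangular

section PrincipalSubmatrix

variable {n k : ℕ}

theorem Fin.le_of_notMem_range_castLE (h : k ≤ n) {l : Fin n}
    (hl : l ∉ Set.range (Fin.castLE h)) : k ≤ l := by
  by_contra hlt
  exact hl ⟨⟨l, not_le.mp hlt⟩, rfl⟩

theorem psub_one (h : k ≤ n) : psub (1 : Matrix (Fin n) (Fin n) ℝ) k h = 1 := by
  ext a b
  simp [psub, one_apply, Fin.ext_iff]

theorem psub_mul_of_upperTri (h : k ≤ n) (A B : Matrix (Fin n) (Fin n) ℝ) (hB : UpperTri B) :
    psub (A * B) k h = psub A k h * psub B k h := by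
  ext a b
  simp only [psub, of_apply, mul_apply]
  refine (Fintype.sum_of_injective _ (Fin.castLE_injective h) _ _ (fun l hl => ?_)
    fun _ => rfl).symm
  have hbl : Fin.castLE h b < l :=
    Fin.lt_def.mpr (lt_of_lt_of_le b.2 (Fin.le_of_notMem_range_castLE h hl))
  rw [hB l _ hbl, mul_zero]

theorem UpperTri.psub_inv {U : Matrix (Fin n) (Fin n) ℝ} (hU : UpperTri U) (hdet : IsUnit U.det)
    (h : k ≤ n) : psub U⁻¹ k h = (psub U k h)⁻¹ :=
  (inv_eq_right_inv <| by
    rw [← psub_mul_of_upperTri h U U⁻¹ hU.inv, mul_nonsing_inv U hdet, psub_one]).symm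

theorem UpperTri.sum_sq_col_eq {B : Matrix (Fin n) (Fin n) ℝ} (hB : UpperTri B) (j : Fin n) :
    ∑ i, B i j ^ 2 = ∑ i, psub B (j + 1) j.2 i (Fin.last j) ^ 2 := by
  refine (Fintype.sum_of_injective _ (Fin.castLE_injective j.2) _ _ (fun l hl => ?_)
    fun _ => rfl).symm
  rw [hB l j (Fin.le_of_notMem_range_castLE j.2 hl), zero_pow two_ne_zero]

theorem LowerTri.psub_col_last {L : Matrix (Fin n) (Fin n) ℝ} (hL : LowerTri L)
    (hdiag : ∀ i, L i i = 1) (m : ℕ) (h : m + 1 ≤ n) :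
    (psub L (m + 1) h).col (Fin.last m) = Pi.single (Fin.last m) 1 := by
  ext i
  rcases (Fin.le_last i).eq_or_lt with rfl | hlt
  · rw [Pi.single_eq_same]
    exact hdiag _
  · rw [Pi.single_eq_of_ne hlt.ne]
    exact hL _ _ hlt

theorem inv_psub_col_last_of_eq_mul {M L U : Matrix (Fin n) (Fin n) ℝ} (hL : LowerTri L)
    (hLdiag : ∀ i, L i i = 1) (hU : UpperTri U) (hLU : M = L * U) (m : ℕ) (h : m + 1 ≤ n)
    (hM : IsUnit (psub M (m + 1) h)) :
    (psub U (m + 1) h)⁻¹.col (Fin.last m) = (psub M (m + 1) h)⁻¹.col (Fin.last m) := by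
  have hfac : psub M (m + 1) h = psub L (m + 1) h * psub U (m + 1) h := by
    rw [hLU, psub_mul_of_upperTri h L U hU]
  have hUinv : (psub U (m + 1) h)⁻¹ = (psub M (m + 1) h)⁻¹ * psub L (m + 1) h :=
    inv_eq_left_inv <| by
      rw [Matrix.mul_assoc, ← hfac, nonsing_inv_mul _ ((isUnit_iff_isUnit_det _).mp hM)]
  rw [← mulVec_single_one, ← mulVec_single_one, hUinv, ← mulVec_mulVec, mulVec_single_one,
    hL.psub_col_last hLdiag]

end PrincipalSubmatrix

theorem sqrt_sum_sq_col_le_specNorm {m n : ℕ} (A : Matrix (Fin m) (Fin n) ℝ) (c : Fin n) :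
    √(∑ i, A i c ^ 2) ≤ specNorm A := by
  have hcol : toEuclideanLin A (EuclideanSpace.single c 1) = WithLp.toLp 2 (A.col c) := by
    rw [toLpLin_apply]
    exact congrArg _ (mulVec_single_one A c)
  calc √(∑ i, A i c ^ 2) = ‖toEuclideanLin A (EuclideanSpace.single c 1)‖ := by
        simp [hcol, EuclideanSpace.norm_eq]
    _ ≤ specNorm A * ‖EuclideanSpace.single c (1 : ℝ)‖ :=
        (LinearMap.toContinuousLinearMap (toEuclideanLin A)).le_opNorm _
    _ = specNorm A := by rw [PiLp.norm_single, norm_one, mul_one]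

theorem stmt_10_general (n : ℕ) (γ : ℝ) (M L U : Matrix (Fin n) (Fin n) ℝ)
    (hinv : ∀ (j : ℕ) (h : j ≤ n), 1 ≤ j →
      IsUnit (psub M j h) ∧ specNorm (psub M j h)⁻¹ ≤ 1 / γ)
    (hL : LowerTri L) (hLdiag : ∀ i, L i i = 1) (hU : UpperTri U) (hLU : M = L * U) :
    ∀ j : Fin n, Real.sqrt (∑ i : Fin n, (U⁻¹ i j) ^ 2) ≤ 1 / γ := by
  intro j
  have hUdet : IsUnit U.det := by
    have hMdet : IsUnit M.det := (isUnit_iff_isUnit_det M).mp (hinv n le_rfl j.pos).1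
    rwa [hLU, det_mul, hL.det_eq_one hLdiag, one_mul] at hMdet
  obtain ⟨hMj, hnorm⟩ := hinv (j + 1) j.2 (Nat.le_add_left 1 j)
  have hcol := inv_psub_col_last_of_eq_mul hL hLdiag hU hLU j j.2 hMj
  calc √(∑ i, U⁻¹ i j ^ 2) = √(∑ i, (psub M (j + 1) j.2)⁻¹ i (Fin.last j) ^ 2) := by
        rw [hU.inv.sum_sq_col_eq j, hU.psub_inv hUdet]
        congr 2 with i
        exact congrArg (· ^ 2) (congrFun hcol i)
    _ ≤ specNorm (psub M (j + 1) j.2)⁻¹ := sqrt_sum_sq_col_le_specNorm _ _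
    _ ≤ 1 / γ := hnorm

/-- Lemma `lem:blockUstab`, scalar case: if all principal submatrices
satisfy `‖(M|_{j×j})⁻¹‖₂ ≤ 1/γ` then every column of `U⁻¹` has Euclidean norm `≤ 1/γ`. -/
theorem stmt_10 (n : ℕ) (γ : ℝ) (hγ : 0 < γ) (M L U : Matrix (Fin n) (Fin n) ℝ)
    (hinv : ∀ (j : ℕ) (h : j ≤ n), 1 ≤ j →
      IsUnit (psub M j h) ∧ specNorm (psub M j h)⁻¹ ≤ 1 / γ)
    (hL : LowerTri L) (hLdiag : ∀ i, L i i = 1) (hU : UpperTri U) (hLU : M = L * U) :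
    ∀ j : Fin n, Real.sqrt (∑ i : Fin n, (U⁻¹ i j) ^ 2) ≤ 1 / γ :=
  stmt_10_general n γ M L U hinv hL hLdiag hU hLU
end

section
/- Block-triangular truncation in Frobenius norm: with block structure $n_0=0<\cdots<n_m=n$ and the block-upper-triangular truncation $\mathcal{U}_b$ (zeroing all blocks $M(i,j)$ with $i>j$), there holds $\vertiii{\mathcal{U}_b(M)}_2 \le \vertiii{M}_2$ for all $M\in\mathbb{R}^{n\times n}$, where $\vertiii{A}_2 = \sup\{\|AX\|_F : X\in\mathcal{D}_b,\ \|X\|_2\le 1\}$. -/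
open Matrix

/-- Frobenius norm of a rectangular real matrix. -/
noncomputable def frobNorm {a b : ℕ} (A : Matrix (Fin a) (Fin b) ℝ) : ℝ :=
  Real.sqrt (∑ i, ∑ j, (A i j) ^ 2)

/-- `X ∈ 𝒟_b`: `X : ℝ^{n×m}` supported on the block-diagonal pattern of the block
structure `nb`. -/
def MemDb {n m : ℕ} (nb : ℕ → ℕ) (X : Matrix (Fin n) (Fin m) ℝ) : Prop :=
  ∀ (i : Fin n) (j : Fin m), ¬(nb j.1 ≤ i.1 ∧ i.1 < nb (j.1 + 1)) → X i j = 0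

/-- Block index of a row/column index `i` with respect to the block structure
`nb 0 = 0 < nb 1 < ⋯ < nb m = n`: the largest `j ≤ m` with `nb j ≤ i`. -/
def blockOf {n : ℕ} (nb : ℕ → ℕ) (m : ℕ) (i : Fin n) : ℕ :=
  Nat.findGreatest (fun j => nb j ≤ i.1) m

/-- Block-upper-triangular truncation: zero out all blocks strictly below the block
diagonal. -/
def triuB {n : ℕ} (nb : ℕ → ℕ) (m : ℕ) (M : Matrix (Fin n) (Fin n) ℝ) :
    Matrix (Fin n) (Fin n) ℝ :=
  Matrix.of fun i k => if blockOf nb m i ≤ blockOf nb m k then M i k else 0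

/-- The block test norm `⦀A⦀₂ = sup { ‖AX‖_F : X ∈ 𝒟_b, ‖X‖₂ ≤ 1 }`. -/
noncomputable def bNorm2 {n m : ℕ} (nb : ℕ → ℕ) (A : Matrix (Fin n) (Fin n) ℝ) : ℝ :=
  ⨆ X : {X : Matrix (Fin n) (Fin m) ℝ // MemDb nb X ∧ specNorm X ≤ 1},
    frobNorm (A * X.1)

/-- `nb` is monotone on `[0, m]`. -/
lemma nb_mono {m : ℕ} {nb : ℕ → ℕ} (hmono : ∀ j < m, nb j < nb (j + 1)) :
    ∀ a b, a ≤ b → b ≤ m → nb a ≤ nb b := by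
  intro a b hab hbm
  induction b with
  | zero => simp [Nat.le_zero.mp hab]
  | succ b ih =>
    rcases Nat.lt_or_ge a (b + 1) with h | h
    · exact le_trans (ih (Nat.lt_succ_iff.mp h) (le_trans (Nat.le_succ b) hbm))
        (le_of_lt (hmono b (by omega)))
    · have : a = b + 1 := le_antisymm hab h
      simp [this]

/-- An index `k` lying inside block `j` has block index `j`. -/
lemma blockOf_eq {n m : ℕ} {nb : ℕ → ℕ} (hmono : ∀ j < m, nb j < nb (j + 1))
    (k : Fin n) (j : Fin m) (h1 : nb j.1 ≤ k.1) (h2 : k.1 < nb (j.1 + 1)) :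
    blockOf nb m k = j.1 := by
  rw [blockOf, Nat.findGreatest_eq_iff]
  refine ⟨j.2.le, fun _ => h1, fun t hjt htm hP => ?_⟩
  have : nb (j.1 + 1) ≤ nb t := nb_mono hmono _ _ hjt htm
  omega

/-- Every entry of a matrix is bounded in absolute value by its spectral norm. -/
lemma specNorm_entry_le {n m : ℕ} (X : Matrix (Fin n) (Fin m) ℝ) (k : Fin n) (j : Fin m) :
    |X k j| ≤ specNorm X := by
  set L := LinearMap.toContinuousLinearMap (Matrix.toEuclideanLin X)
  set v : EuclideanSpace ℝ (Fin m) := EuclideanSpace.single j (1 : ℝ)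
  have hLv : ∀ i, L v i = X i j := by
    intro i
    show Matrix.toEuclideanLin X v i = X i j
    rw [Matrix.toEuclideanLin_apply]
    show (X *ᵥ (WithLp.equiv 2 (Fin m → ℝ)) v) i = X i j
    have : (WithLp.equiv 2 (Fin m → ℝ)) v = Pi.single j 1 := rfl
    rw [this, Matrix.mulVec_single]
    simp
  have h1 : |X k j| ≤ ‖L v‖ := by
    rw [EuclideanSpace.norm_eq]
    have : |X k j| = Real.sqrt (‖L v k‖ ^ 2) := by
      rw [hLv k, Real.sqrt_sq_eq_abs]; simp
    rw [this]
    apply Real.sqrt_le_sqrt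
    exact Finset.single_le_sum (f := fun i => ‖L v i‖ ^ 2) (fun i _ => by positivity)
      (Finset.mem_univ k)
  have h2 : ‖L v‖ ≤ ‖L‖ * ‖v‖ := L.le_opNorm v
  have h3 : ‖v‖ = 1 := by simp [v, EuclideanSpace.norm_single]
  rw [h3, mul_one] at h2
  exact h1.trans h2

/-- For `X ∈ 𝒟_b`, the entries of `𝒰_b(M) * X` are either equal to those of `M * X`
or zero. -/
lemma triuB_mul_entry {n m : ℕ} {nb : ℕ → ℕ} (hmono : ∀ j < m, nb j < nb (j + 1))
    (M : Matrix (Fin n) (Fin n) ℝ) {X : Matrix (Fin n) (Fin m) ℝ} (hX : MemDb nb X)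
    (i : Fin n) (j : Fin m) :
    (triuB nb m M * X) i j = if blockOf nb m i ≤ j.1 then (M * X) i j else 0 := by
  simp only [Matrix.mul_apply, triuB, Matrix.of_apply]
  by_cases hij : blockOf nb m i ≤ j.1
  · rw [if_pos hij]
    apply Finset.sum_congr rfl
    intro k _
    by_cases hk : X k j = 0
    · simp [hk]
    · have hb : nb j.1 ≤ k.1 ∧ k.1 < nb (j.1 + 1) := by
        by_contra h; exact hk (hX k j h)
      have hble : blockOf nb m i ≤ blockOf nb m k := by
        rw [blockOf_eq hmono k j hb.1 hb.2]; exact hij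
      rw [if_pos hble]
  · rw [if_neg hij]
    apply Finset.sum_eq_zero
    intro k _
    by_cases hk : X k j = 0
    · simp [hk]
    · have hb : nb j.1 ≤ k.1 ∧ k.1 < nb (j.1 + 1) := by
        by_contra h; exact hk (hX k j h)
      have : ¬ blockOf nb m i ≤ blockOf nb m k := by
        rw [blockOf_eq hmono k j hb.1 hb.2]; exact hij
      rw [if_neg this, zero_mul]

/-- Lemma `lem:blocktruncation`, case `q = 1`:
`⦀𝒰_b(M)⦀₂ ≤ ⦀M⦀₂`. -/
theorem stmt_17 (n m : ℕ) (nb : ℕ → ℕ)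
    (hnb0 : nb 0 = 0) (hnbm : nb m = n) (hmono : ∀ j < m, nb j < nb (j + 1))
    (M : Matrix (Fin n) (Fin n) ℝ) :
    bNorm2 (m := m) nb (triuB nb m M) ≤ bNorm2 (m := m) nb M := by
  have hne : Nonempty {X : Matrix (Fin n) (Fin m) ℝ // MemDb nb X ∧ specNorm X ≤ 1} := by
    refine ⟨⟨0, fun i j _ => rfl, ?_⟩⟩
    simp only [specNorm, map_zero]
    norm_num
  -- uniform bound over the test set
  set C : ℝ := Real.sqrt (∑ i : Fin n, ∑ j : Fin m, (∑ k : Fin n, |M i k|) ^ 2) with hC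
  have hbd : ∀ X : {X : Matrix (Fin n) (Fin m) ℝ // MemDb nb X ∧ specNorm X ≤ 1},
      frobNorm (M * X.1) ≤ C := by
    rintro ⟨X, hXd, hXs⟩
    apply Real.sqrt_le_sqrt
    apply Finset.sum_le_sum; intro i _
    apply Finset.sum_le_sum; intro j _
    have habs : |(M * X) i j| ≤ ∑ k : Fin n, |M i k| := by
      rw [Matrix.mul_apply]
      refine (Finset.abs_sum_le_sum_abs _ _).trans ?_
      apply Finset.sum_le_sum; intro k _
      rw [abs_mul]
      have hXk : |X k j| ≤ 1 := (specNorm_entry_le X k j).trans hXs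
      calc |M i k| * |X k j| ≤ |M i k| * 1 :=
            mul_le_mul_of_nonneg_left hXk (abs_nonneg _)
        _ = |M i k| := mul_one _
    calc ((M * X) i j) ^ 2 = |(M * X) i j| ^ 2 := (sq_abs _).symm
      _ ≤ (∑ k : Fin n, |M i k|) ^ 2 := by
          apply pow_le_pow_left₀ (abs_nonneg _) habs
  have hBdd : BddAbove (Set.range fun X :
      {X : Matrix (Fin n) (Fin m) ℝ // MemDb nb X ∧ specNorm X ≤ 1} =>
      frobNorm (M * X.1)) := ⟨C, by rintro _ ⟨X, rfl⟩; exact hbd X⟩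
  refine ciSup_mono hBdd ?_
  rintro ⟨X, hXd, hXs⟩
  apply Real.sqrt_le_sqrt
  apply Finset.sum_le_sum; intro i _
  apply Finset.sum_le_sum; intro j _
  rw [triuB_mul_entry hmono M hXd i j]
  split
  · exact le_refl _
  · simpa using sq_nonneg ((M * X) i j)
end

section
/- Let $\mathcal{X}$ be a Hilbert space with nested finite-dimensional subspaces $\mathcal{X}_0\subseteq\mathcal{X}_1\subseteq\cdots\subseteq\mathcal{X}_{N+1}$ and a nested orthonormal basis built blockwise as orthonormal complements. Let $M$ be the stiffness matrix of a bilinear form $a$ in this basis with $\|M\|_2 \le C_a$ and $\|M[k]^{-1}\|_2 \le 1/\gamma$ for all principal block-submatrices $M[k]$. If $M$ has a block-$LU$-factorization $M = LU$, and $\lambda(k)$ denotes the coefficient vector of the Galerkin solution $u_k \in \mathcal{X}_k$, then $(U\lambda(N+1))_i = (U\lambda(k))_i$ for all $i \le n_{k+1}$ and $(U\lambda(k))_i = 0$ for $i > n_{k+1}$; consequently $\sum_{k=0}^{N}\|u_{k+1}-u_k\|_{\mathcal{X}}^2 \le \frac{C_a^2}{\gamma^2}\|U\|_2^2 \max_{1\le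 k\le N+1}\|U^{-1}(:,k)\|_2^2 \cdot \|u - u_0\|_{\mathcal{X}}^2$ where $u$ is the exact solution. -/
open Matrix

/-! Since `L` is unit lower triangular, the Galerkin equations `M λ(k) = F` on the first
`n_{k+1}` rows force `Uλ(k)` to agree there with `Uλ(N+1)`, and since `U` is block upper
triangular, `Uλ(k)` vanishes beyond them. So `U(λ(k+1) - λ(k))` is the restriction of
`w = U(λ(N+1) - λ(0))` to block `k+1`, whence `λ(k+1) - λ(k) = U⁻¹(:,k+1) w` and, the blocks
being disjoint, `∑ ‖u_{k+1} - u_k‖² ≤ maxₖ ‖U⁻¹(:,k)‖² ‖U‖² ‖λ(N+1) - λ(0)‖²`. Finally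
Galerkin orthogonality gives `M(λ(N+1) - λ(0)) = (a(u - u₀, y_i))_i`, whose norm is at most
`C_a ‖u - u₀‖`, and `‖M⁻¹‖ ≤ 1/γ`. -/

open Finset

lemma specNorm_nonneg {m n : ℕ} (A : Matrix (Fin m) (Fin n) ℝ) : 0 ≤ specNorm A :=
  norm_nonneg _

lemma sum_sq_mulVec_le {m n : ℕ} (A : Matrix (Fin m) (Fin n) ℝ) (v : Fin n → ℝ) :
    ∑ i, (A *ᵥ v) i ^ 2 ≤ specNorm A ^ 2 * ∑ j, v j ^ 2 := by
  have hnorm : ∀ {k : ℕ} (x : Fin k → ℝ), ‖WithLp.toLp 2 x‖ ^ 2 = ∑ i, x i ^ 2 := fun x => by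
    simp [EuclideanSpace.norm_sq_eq]
  have h : ‖WithLp.toLp 2 (A *ᵥ v)‖ ≤ specNorm A * ‖WithLp.toLp 2 v‖ :=
    (LinearMap.toContinuousLinearMap (toEuclideanLin A)).le_opNorm (WithLp.toLp 2 v)
  have := pow_le_pow_left₀ (norm_nonneg _) h 2
  rwa [mul_pow, hnorm, hnorm] at this

lemma sum_sq_le_specNorm_inv_mul {n : ℕ} {A : Matrix (Fin n) (Fin n) ℝ} (hA : IsUnit A)
    (v : Fin n → ℝ) : ∑ j, v j ^ 2 ≤ specNorm A⁻¹ ^ 2 * ∑ i, (A *ᵥ v) i ^ 2 := by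
  simpa [mulVec_mulVec, nonsing_inv_mul A ((isUnit_iff_isUnit_det A).mp hA)] using
    sum_sq_mulVec_le A⁻¹ (A *ᵥ v)

section Orthonormal

variable {E ι : Type*} [NormedAddCommGroup E] [InnerProductSpace ℝ E] [Fintype ι]
  {b : ι → E}

lemma Orthonormal.norm_sum_smul_sq (hb : Orthonormal ℝ b) (c : ι → ℝ) :
    ‖∑ i, c i • b i‖ ^ 2 = ∑ i, c i ^ 2 := by
  rw [← real_inner_self_eq_norm_sq, hb.inner_sum]
  simp [sq]

lemma Orthonormal.norm_sum_smul_sub_sq (hb : Orthonormal ℝ b) (c c' : ι → ℝ) :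
    ‖∑ i, c i • b i - ∑ i, c' i • b i‖ ^ 2 = ∑ i, (c - c') i ^ 2 := by
  simpa [sub_smul] using hb.norm_sum_smul_sq (c - c')

lemma Orthonormal.sum_sq_apply_le (hb : Orthonormal ℝ b) (φ : E →ₗ[ℝ] ℝ) {C : ℝ}
    (hφ : ∀ y, |φ y| ≤ C * ‖y‖) : ∑ i, φ (b i) ^ 2 ≤ C ^ 2 := by
  set p := ∑ i, φ (b i) • b i
  have hp : ‖p‖ ^ 2 = ∑ i, φ (b i) ^ 2 := hb.norm_sum_smul_sq _
  have hφp : φ p = ∑ i, φ (b i) ^ 2 := by simp [p, map_sum, sq]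
  have : ‖p‖ ^ 2 ≤ C * ‖p‖ := hp ▸ hφp ▸ (le_abs_self _).trans (hφ p)
  rw [← hp]
  nlinarith [sq_nonneg (‖p‖ - C)]

end Orthonormal

section Triangular

variable {ι R : Type*}

lemma Matrix.BlockTriangular.mulVec_apply_eq_zero [Fintype ι] {α : Type*} [LinearOrder α]
    [NonUnitalNonAssocSemiring R] {U : Matrix ι ι R} {b : ι → α} (hU : U.BlockTriangular b)
    {v : ι → R} {k : α} (hv : ∀ j, k < b j → v j = 0) {i : ι} (hi : k < b i) :
    (U *ᵥ v) i = 0 := by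
  simp only [mulVec, dotProduct]
  refine sum_eq_zero fun j _ => ?_
  rcases lt_or_ge k (b j) with hj | hj
  · rw [hv j hj, mul_zero]
  · rw [hU (hj.trans_lt hi), zero_mul]

lemma eq_zero_of_lt_of_blockLowerUnitriangular {α : Type*} [LinearOrder ι] [LinearOrder α]
    [Zero R] [One R] {L : Matrix ι ι R} {b : ι → α} (hb : Monotone b)
    (hlow : ∀ i j, b i < b j → L i j = 0)
    (hdiag : ∀ i j, b i = b j → L i j = if i = j then 1 else 0) {i j : ι} (hij : i < j) :
    L i j = 0 := by
  rcases (hb hij.le).lt_or_eq with h | h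
  · exact hlow i j h
  · rw [hdiag i j h, if_neg hij.ne]

lemma eq_on_of_lowerUnitriangular_mulVec_eq_on [Fintype ι] [LinearOrder ι] [NonAssocRing R]
    {L : Matrix ι ι R} (hL : ∀ i j, i < j → L i j = 0) (hdiag : ∀ i, L i i = 1)
    {s : Set ι} (hs : IsLowerSet s) {x y : ι → R} (h : ∀ i ∈ s, (L *ᵥ x) i = (L *ᵥ y) i) :
    ∀ i ∈ s, x i = y i := by
  intro i
  induction i using WellFoundedLT.induction with
  | _ i ih =>
    intro hi
    have hsum : (L *ᵥ (x - y)) i = (x - y) i := by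
      refine (sum_eq_single i (fun j _ hji => ?_) (by simp)).trans (by simp [hdiag])
      rcases hji.lt_or_gt with hj | hj
      · simp [ih j hj (hs hj.le hi)]
      · simp [hL i j hj]
    rw [mulVec_sub, Pi.sub_apply, h i hi, sub_self] at hsum
    exact sub_eq_zero.mp hsum.symm

lemma of_ite_mulVec_eq_mulVec [Fintype ι] {m : Type*} [NonUnitalNonAssocSemiring R]
    (A : Matrix m ι R) (P : ι → Prop) [DecidablePred P] {v : ι → R} (hv : ∀ j, ¬ P j → v j = 0) :
    (of fun i j => if P j then A i j else 0) *ᵥ v = A *ᵥ v := by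
  ext i
  refine sum_congr rfl fun j _ => ?_
  by_cases hj : P j
  · simp [hj]
  · simp [hj, hv j hj]

end Triangular

lemma sum_sq_le_of_mulVec_eq_ite {n : ℕ} {U : Matrix (Fin n) (Fin n) ℝ} (hU : IsUnit U)
    (P : Fin n → Prop) [DecidablePred P] {d v : Fin n → ℝ}
    (hd : ∀ i, (U *ᵥ d) i = if P i then v i else 0) :
    ∑ i, d i ^ 2 ≤
      specNorm (of fun i j => if P j then U⁻¹ i j else 0) ^ 2 * ∑ j with P j, v j ^ 2 := by
  have hd' : d = (of fun i j => if P j then U⁻¹ i j else 0) *ᵥ (U *ᵥ d) := by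
    rw [of_ite_mulVec_eq_mulVec, mulVec_mulVec,
      nonsing_inv_mul _ ((isUnit_iff_isUnit_det U).mp hU), one_mulVec]
    intro j hj
    rw [hd, if_neg hj]
  calc ∑ i, d i ^ 2
      ≤ specNorm (of fun i j => if P j then U⁻¹ i j else 0) ^ 2 * ∑ j, (U *ᵥ d) j ^ 2 := by
        nth_rw 1 [hd']
        exact sum_sq_mulVec_le _ _
    _ = _ := by
        simp only [hd, ite_pow, sum_filter]
        simp

section Blocks

variable {nb : ℕ → ℕ} {m : ℕ}

lemma blockOf_mono (nb : ℕ → ℕ) (m : ℕ) {n : ℕ} : Monotone (blockOf (n := n) nb m) :=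
  fun _ _ hij => Nat.findGreatest_mono_left (fun _ ht => ht.trans hij) m

lemma lt_blockOf_iff {n : ℕ} (hnb : MonotoneOn nb (Set.Iic m)) {k : ℕ} (hk : k + 1 ≤ m)
    (i : Fin n) : k < blockOf nb m i ↔ nb (k + 1) ≤ i.1 := by
  refine ⟨fun h => ?_, fun h => Nat.le_findGreatest hk h⟩
  have hne : blockOf nb m i ≠ 0 := by omega
  have hspec : nb (blockOf nb m i) ≤ i.1 :=
    Nat.findGreatest_of_ne_zero (P := (nb · ≤ i.1)) rfl hne
  exact (hnb hk (Nat.findGreatest_le m) h).trans hspec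

lemma sum_sum_filter_block_le {n : ℕ} (hnb : MonotoneOn nb (Set.Iic m)) {g : Fin n → ℝ}
    (hg : ∀ j, 0 ≤ g j) :
    ∑ k ∈ range m, ∑ j with nb k ≤ j.1 ∧ j.1 < nb (k + 1), g j ≤ ∑ j, g j := by
  rw [← sum_biUnion]
  · exact sum_le_univ_sum_of_nonneg hg
  intro k hk l hl hkl
  wlog h : k < l generalizing k l
  · exact (this hl hk hkl.symm (by omega)).symm
  have hkl' : nb (k + 1) ≤ nb l :=
    hnb (Set.mem_Iic.2 (mem_range.1 hk)) (Set.mem_Iic.2 (mem_range.1 hl).le) h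
  exact disjoint_filter.2 fun j _ hjk hjl => by omega

lemma sub_eq_ite_of_agree_vanish {n K : ℕ} (hnb : MonotoneOn nb (Set.Iic (K + 1)))
    {y : ℕ → Fin n → ℝ} {w : Fin n → ℝ}
    (hagree : ∀ k ≤ K, ∀ i : Fin n, i.1 < nb (k + 1) → w i = y k i)
    (hvanish : ∀ k ≤ K, ∀ i : Fin n, nb (k + 1) ≤ i.1 → y k i = 0)
    {k : ℕ} (hk : k + 1 ≤ K) (i : Fin n) :
    y (k + 1) i - y k i =
      if nb (k + 1) ≤ i.1 ∧ i.1 < nb (k + 1 + 1) then w i - y 0 i else 0 := by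
  have h01 : nb (0 + 1) ≤ nb (k + 1) :=
    hnb (Set.mem_Iic.2 (by omega)) (Set.mem_Iic.2 (by omega)) (by omega)
  have h12 : nb (k + 1) ≤ nb (k + 1 + 1) :=
    hnb (Set.mem_Iic.2 (by omega)) (Set.mem_Iic.2 (by omega)) (by omega)
  by_cases hi : i.1 < nb (k + 1)
  · rw [if_neg (by omega), ← hagree k (by omega) i hi, ← hagree (k + 1) hk i (by omega), sub_self]
  rw [hvanish k (by omega) i (by omega), sub_zero]
  split_ifs with hi'
  · rw [hvanish 0 (by omega) i (by omega), sub_zero, hagree (k + 1) hk i hi'.2]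
  · exact hvanish (k + 1) hk i (by omega)

end Blocks

lemma sum_norm_sq_increment_le {E : Type*} [NormedAddCommGroup E] [InnerProductSpace ℝ E]
    {n K : ℕ} {nb : ℕ → ℕ} (hnb : MonotoneOn nb (Set.Iic (K + 1))) {b : Fin n → E}
    (hb : Orthonormal ℝ b) {U : Matrix (Fin n) (Fin n) ℝ} (hU : IsUnit U)
    {lam : ℕ → Fin n → ℝ}
    (hagree : ∀ k ≤ K, ∀ i : Fin n, i.1 < nb (k + 1) → (U *ᵥ lam K) i = (U *ᵥ lam k) i)
    (hvanish : ∀ k ≤ K, ∀ i : Fin n, nb (k + 1) ≤ i.1 → (U *ᵥ lam k) i = 0) (hK : 1 ≤ K) :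
    ∑ k ∈ range K, ‖∑ i, lam (k + 1) i • b i - ∑ i, lam k i • b i‖ ^ 2 ≤
      (Icc 1 K).sup' (nonempty_Icc.mpr hK) (fun k => specNorm (of fun i j : Fin n =>
        if nb k ≤ j.1 ∧ j.1 < nb (k + 1) then U⁻¹ i j else 0) ^ 2) *
      ∑ j, (U *ᵥ (lam K - lam 0)) j ^ 2 := by
  set g : ℕ → ℝ := fun k => specNorm (of fun i j : Fin n =>
    if nb k ≤ j.1 ∧ j.1 < nb (k + 1) then U⁻¹ i j else 0) ^ 2
  set v := U *ᵥ (lam K - lam 0)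
  set T := (Icc 1 K).sup' (nonempty_Icc.mpr hK) g
  have hinc : ∀ k ∈ range K, ‖∑ i, lam (k + 1) i • b i - ∑ i, lam k i • b i‖ ^ 2 ≤
      T * ∑ j with nb (k + 1) ≤ j.1 ∧ j.1 < nb (k + 1 + 1), v j ^ 2 := fun k hk => by
    have hk : k + 1 ≤ K := mem_range.1 hk
    rw [hb.norm_sum_smul_sub_sq]
    refine (sum_sq_le_of_mulVec_eq_ite hU _ fun i => ?_).trans
      (mul_le_mul_of_nonneg_right (le_sup' g (mem_Icc.2 ⟨by omega, hk⟩))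
        (sum_nonneg fun _ _ => sq_nonneg _))
    rw [mulVec_sub, Pi.sub_apply, sub_eq_ite_of_agree_vanish hnb hagree hvanish hk i]
    simp [v, mulVec_sub]
  have hblocks : MonotoneOn (fun k => nb (k + 1)) (Set.Iic K) := fun i hi j hj hij =>
    hnb (Set.mem_Iic.2 (by simp at hi; omega)) (Set.mem_Iic.2 (by simp at hj; omega)) (by omega)
  have hT0 : 0 ≤ T := le_sup'_of_le g (mem_Icc.2 ⟨le_rfl, hK⟩) (sq_nonneg _)
  calc _ ≤ ∑ k ∈ range K, T * ∑ j with nb (k + 1) ≤ j.1 ∧ j.1 < nb (k + 1 + 1), v j ^ 2 :=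
        sum_le_sum hinc
    _ ≤ T * ∑ j, v j ^ 2 := by
        rw [← mul_sum]
        exact mul_le_mul_of_nonneg_left (sum_sum_filter_block_le hblocks fun _ => sq_nonneg _) hT0

section Galerkin

variable {𝒳 𝒴 : Type*} [NormedAddCommGroup 𝒳] [InnerProductSpace ℝ 𝒳]
  [NormedAddCommGroup 𝒴] [InnerProductSpace ℝ 𝒴] {n : ℕ}
  (a : 𝒳 →ₗ[ℝ] 𝒴 →ₗ[ℝ] ℝ) {bX : Fin n → 𝒳} {bY : Fin n → 𝒴} {M : Matrix (Fin n) (Fin n) ℝ}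

lemma mulVec_apply_eq_apply_sum (hM : ∀ r t, M r t = a (bX t) (bY r)) (c : Fin n → ℝ)
    (i : Fin n) : (M *ᵥ c) i = a (∑ j, c j • bX j) (bY i) := by
  simp [mulVec, dotProduct, hM, map_sum, mul_comm]

lemma sum_sq_sub_le_of_galerkin {Ca γ : ℝ} (hbY : Orthonormal ℝ bY)
    (hbdd : ∀ x y, |a x y| ≤ Ca * ‖x‖ * ‖y‖) (hM : ∀ r t, M r t = a (bX t) (bY r))
    (hMunit : IsUnit M) (hMinv : specNorm M⁻¹ ≤ 1 / γ) {u : 𝒳} {x : Fin n → ℝ}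
    (hx : ∀ i, (M *ᵥ x) i = a u (bY i)) (c : Fin n → ℝ) :
    ∑ i, (x - c) i ^ 2 ≤ (Ca / γ) ^ 2 * ‖u - ∑ j, c j • bX j‖ ^ 2 := by
  set e := u - ∑ j, c j • bX j
  have horth : ∀ i, (M *ᵥ (x - c)) i = a e (bY i) := fun i => by
    rw [mulVec_sub, Pi.sub_apply, hx, mulVec_apply_eq_apply_sum a hM, map_sub,
      LinearMap.sub_apply]
  have hres : ∑ i, (M *ᵥ (x - c)) i ^ 2 ≤ (Ca * ‖e‖) ^ 2 := by
    simp_rw [horth]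
    exact hbY.sum_sq_apply_le (a e) (hbdd e)
  calc ∑ i, (x - c) i ^ 2 ≤ specNorm M⁻¹ ^ 2 * ∑ i, (M *ᵥ (x - c)) i ^ 2 :=
        sum_sq_le_specNorm_inv_mul hMunit _
    _ ≤ (1 / γ) ^ 2 * (Ca * ‖e‖) ^ 2 := by
        gcongr
        exact specNorm_nonneg _
    _ = (Ca / γ) ^ 2 * ‖e‖ ^ 2 := by ring

end Galerkin

/-- Lemma `lem:luqoN`: in a nested orthonormal basis, for the
stiffness matrix `M` with block-`LU`-factorization `M = LU`, the vectors `Uλ(k)`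
coincide with `Uλ(N+1)` on the first `n_{k+1}` entries and vanish beyond them, and the
sum of squared increments of the Galerkin solutions is controlled by
`(C_a²/γ²) ‖U‖₂² maxₖ ‖U⁻¹(:,k)‖₂² ‖u - u₀‖²`. -/
theorem stmt_19
    {𝒳 𝒴 : Type*} [NormedAddCommGroup 𝒳] [InnerProductSpace ℝ 𝒳]
    [NormedAddCommGroup 𝒴] [InnerProductSpace ℝ 𝒴]
    (a : 𝒳 →ₗ[ℝ] 𝒴 →ₗ[ℝ] ℝ) (Ca γ : ℝ)
    (hbdd : ∀ (x : 𝒳) (y : 𝒴), |a x y| ≤ Ca * ‖x‖ * ‖y‖)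
    (f : 𝒴 →L[ℝ] ℝ)
    (n N : ℕ) (nb : ℕ → ℕ)
    (hnbend : nb (N + 2) = n)
    (hmono : ∀ k < N + 2, nb k < nb (k + 1))
    (bX : Fin n → 𝒳) (hbX : Orthonormal ℝ bX)
    (bY : Fin n → 𝒴) (hbY : Orthonormal ℝ bY)
    (M : Matrix (Fin n) (Fin n) ℝ)
    (hMdef : ∀ r t : Fin n, M r t = a (bX t) (bY r))
    (hMinv : ∀ (k : ℕ), k ≤ N + 1 → ∀ h : nb (k + 1) ≤ n,
      IsUnit (psub M (nb (k + 1)) h) ∧ specNorm (psub M (nb (k + 1)) h)⁻¹ ≤ 1 / γ)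
    (L U : Matrix (Fin n) (Fin n) ℝ)
    (hLU : M = L * U) (hUunit : IsUnit U)
    (hLlow : ∀ i j : Fin n, blockOf nb (N + 2) i < blockOf nb (N + 2) j → L i j = 0)
    (hLdiag : ∀ i j : Fin n, blockOf nb (N + 2) i = blockOf nb (N + 2) j →
      L i j = if i = j then 1 else 0)
    (hUup : ∀ i j : Fin n, blockOf nb (N + 2) j < blockOf nb (N + 2) i → U i j = 0)
    (lam : ℕ → Fin n → ℝ)
    (hsupp : ∀ k ≤ N + 1, ∀ i : Fin n, nb (k + 1) ≤ i.1 → lam k i = 0)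
    (hgal : ∀ k ≤ N + 1, ∀ i : Fin n, i.1 < nb (k + 1) →
      M.mulVec (lam k) i = f (bY i))
    (u : 𝒳) (hu : ∀ v : 𝒴, a u v = f v) :
    (∀ k ≤ N + 1,
      (∀ i : Fin n, i.1 < nb (k + 1) → U.mulVec (lam (N + 1)) i = U.mulVec (lam k) i) ∧
      (∀ i : Fin n, nb (k + 1) ≤ i.1 → U.mulVec (lam k) i = 0)) ∧
    ∑ k ∈ Finset.range (N + 1),
        ‖(∑ i, lam (k + 1) i • bX i) - ∑ i, lam k i • bX i‖ ^ 2 ≤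
      Ca ^ 2 / γ ^ 2 * specNorm U ^ 2 *
        ((Finset.Icc 1 (N + 1)).sup' (Finset.nonempty_Icc.mpr (by omega)) fun k =>
          specNorm (Matrix.of fun i j : Fin n =>
            if nb k ≤ j.1 ∧ j.1 < nb (k + 1) then U⁻¹ i j else 0) ^ 2) *
        ‖u - ∑ i, lam 0 i • bX i‖ ^ 2 := by
  subst hnbend
  have hnb : MonotoneOn nb (Set.Iic (N + 2)) := (strictMonoOn_Iic_of_lt_succ hmono).monotoneOn
  have hagree : ∀ k ≤ N + 1, ∀ i : Fin (nb (N + 2)), i.1 < nb (k + 1) →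
      (U *ᵥ lam (N + 1)) i = (U *ᵥ lam k) i := fun k hk =>
    eq_on_of_lowerUnitriangular_mulVec_eq_on (s := {i | i.1 < nb (k + 1)})
      (fun _ _ => eq_zero_of_lt_of_blockLowerUnitriangular (blockOf_mono nb (N + 2)) hLlow
        hLdiag)
      (fun i => by simp [hLdiag i i rfl]) (fun _ _ hji hj => lt_of_le_of_lt (α := ℕ) hji hj)
      fun i hi => by
        rw [mulVec_mulVec, mulVec_mulVec, ← hLU, hgal _ le_rfl i i.isLt, hgal k hk i hi]
  have hvanish : ∀ k ≤ N + 1, ∀ i : Fin (nb (N + 2)), nb (k + 1) ≤ i.1 → (U *ᵥ lam k) i = 0 :=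
    fun k hk i hi => Matrix.BlockTriangular.mulVec_apply_eq_zero hUup
      (fun j hj => hsupp k hk j ((lt_blockOf_iff hnb (by omega) j).1 hj))
      ((lt_blockOf_iff hnb (by omega) i).2 hi)
  refine ⟨fun k hk => ⟨hagree k hk, hvanish k hk⟩, ?_⟩
  -- `psub M (nb (N + 2)) le_rfl` is `M` itself, by definitional unfolding
  obtain ⟨hMunit, hMinvNorm⟩ := hMinv (N + 1) le_rfl le_rfl
  have hquasiopt := sum_sq_sub_le_of_galerkin a hbY hbdd hMdef hMunit hMinvNorm
    (fun i => (hgal _ le_rfl i i.isLt).trans (hu _).symm) (lam 0)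
  calc _ ≤ _ := sum_norm_sq_increment_le hnb hbX hUunit hagree hvanish (by omega)
    _ ≤ _ := mul_le_mul_of_nonneg_left ((sum_sq_mulVec_le U _).trans
          (mul_le_mul_of_nonneg_left hquasiopt (sq_nonneg _)))
        (le_sup'_of_le _ (mem_Icc.2 ⟨le_rfl, by omega⟩) (sq_nonneg _))
    _ = _ := by ring
end
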